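/- arXiv:1904.09298 — 8 statements merged into one kernel-verified Lean document; each statement's English description precedes it below -/
import Mathlib

section
/- For any graph G with vertex set [n] and any π in the lattice of contractions L_G, μ_L(0̂_n, π) ≠ 0, and Y_G = Σ_{π ∈ L_G} μ_L(0̂_n, π) p_π. -/
open scoped Classical
noncomputable section

instance (n : ℕ) : Fintype (Setoid (Fin n)) := by
  haveI : Finite (Setoid (Fin n)) :=
    Finite.of_injective (fun s : Setoid (Fin n) => s.r)
      (fun a b h => Setoid.ext fun x y => by rw [show a.r = b.r from h])
  exact Fintype.ofFinite _

/-- Homogeneous degree-`n` part of formal power series in noncommuting variables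
`x_0, x_1, x_2, …`: a coefficient for each word (monomial) of length `n`. -/
abbrev NCF (n : ℕ) := (Fin n → ℕ) → ℚ

/-- Power sum symmetric function in noncommuting variables. -/
def pfun {n : ℕ} (π : Setoid (Fin n)) : NCF n :=
  fun w => if ∀ i j : Fin n, π.r i j → w i = w j then 1 else 0

/-- Elementary symmetric function in noncommuting variables. -/
def efun {n : ℕ} (π : Setoid (Fin n)) : NCF n :=
  fun w => if ∀ i j : Fin n, i ≠ j → π.r i j → w i ≠ w j then 1 else 0

/-- Chromatic symmetric function in noncommuting variables. -/
def YG {n : ℕ} (G : SimpleGraph (Fin n)) : NCF n :=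
  fun w => if ∀ i j : Fin n, G.Adj i j → w i ≠ w j then 1 else 0

/-- Product (concatenation of monomials) of noncommuting series. -/
def ncmul {n m : ℕ} (f : NCF n) (g : NCF m) : NCF (n + m) :=
  fun w => f (fun i => w (Fin.castAdd m i)) * g (fun j => w (Fin.natAdd n j))

/-- `π` is a connected partition of `G`: each block induces a connected subgraph. -/
def connPart {n : ℕ} (G : SimpleGraph (Fin n)) (π : Setoid (Fin n)) : Prop :=
  ∀ b ∈ π.classes, (G.induce b).Connected

/-- `mu` is the Möbius function of the lattice of set partitions of `[n]`
(ordered by refinement). -/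
def MoebiusPi (n : ℕ) (mu : Setoid (Fin n) → Setoid (Fin n) → ℚ) : Prop :=
  ∀ σ π : Setoid (Fin n), σ ≤ π →
    (∑ τ : Setoid (Fin n), if σ ≤ τ ∧ τ ≤ π then mu σ τ else 0) = if σ = π then 1 else 0

/-- Schur function in noncommuting variables (relative to a Möbius function `mu`). -/
def xf {n : ℕ} (mu : Setoid (Fin n) → Setoid (Fin n) → ℚ) (π : Setoid (Fin n)) : NCF n :=
  ∑ σ : Setoid (Fin n), if σ ≤ π then mu σ π • pfun σ else 0

/-- The disjoint union of complete graphs on the blocks of `π`. -/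
def graphOf {n : ℕ} (π : Setoid (Fin n)) : SimpleGraph (Fin n) where
  Adj i j := i ≠ j ∧ π.r i j
  symm := by constructor; intro i j h; exact ⟨Ne.symm h.1, π.iseqv.symm h.2⟩
  loopless := by constructor; intro i h; exact h.1 rfl


open Relation

variable {n : ℕ}

def eRel (E : Finset (Sym2 (Fin n))) : Fin n → Fin n → Prop := fun x y => s(x,y) ∈ E

def span (E : Finset (Sym2 (Fin n))) : Setoid (Fin n) := EqvGen.setoid (eRel E)

lemma span_le {E : Finset (Sym2 (Fin n))} {σ : Setoid (Fin n)} :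
    span E ≤ σ ↔ ∀ x y, s(x,y) ∈ E → σ x y := by
  constructor
  · intro h x y hxy
    exact h (EqvGen.rel _ _ hxy)
  · exact Setoid.eqvGen_le

lemma span_rel {E : Finset (Sym2 (Fin n))} {x y : Fin n} (h : s(x,y) ∈ E) : span E x y :=
  EqvGen.rel _ _ h

lemma span_mono {E F : Finset (Sym2 (Fin n))} (h : E ⊆ F) : span E ≤ span F :=
  span_le.2 fun _ _ hxy => span_rel (h hxy)

lemma span_empty : (span (∅ : Finset (Sym2 (Fin n)))) = ⊥ :=
  le_antisymm (span_le.2 (by simp)) bot_le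

lemma span_insert (e : Sym2 (Fin n)) (E : Finset (Sym2 (Fin n))) :
    span (insert e E) = span {e} ⊔ span E := by
  refine le_antisymm (span_le.2 ?_) (sup_le (span_mono (by simp)) (span_mono (by simp)))
  intro x y hxy
  rcases Finset.mem_insert.1 hxy with h | h
  · exact le_sup_left (α := Setoid (Fin n)) (span_rel (by simp [h]))
  · exact le_sup_right (α := Setoid (Fin n)) (span_rel h)

def merge (β : Setoid (Fin n)) (a b : Fin n) : Setoid (Fin n) where
  r x y := β x y ∨ (β x a ∧ β b y) ∨ (β x b ∧ β a y)
  iseqv := by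
    constructor
    · intro x; exact Or.inl (β.refl x)
    · rintro x y (h | ⟨h1, h2⟩ | ⟨h1, h2⟩)
      · exact Or.inl (β.symm h)
      · exact Or.inr (Or.inr ⟨β.symm h2, β.symm h1⟩)
      · exact Or.inr (Or.inl ⟨β.symm h2, β.symm h1⟩)
    · rintro x y z (h | ⟨h1, h2⟩ | ⟨h1, h2⟩) (g | ⟨g1, g2⟩ | ⟨g1, g2⟩)
      · exact Or.inl (β.trans h g)
      · exact Or.inr (Or.inl ⟨β.trans h g1, g2⟩)
      · exact Or.inr (Or.inr ⟨β.trans h g1, g2⟩)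
      · exact Or.inr (Or.inl ⟨h1, β.trans h2 g⟩)
      · exact Or.inl (β.trans h1 (β.trans (β.symm g1) (β.trans (β.symm h2) g2)))
      · exact Or.inl (β.trans h1 g2)
      · exact Or.inr (Or.inr ⟨h1, β.trans h2 g⟩)
      · exact Or.inl (β.trans h1 g2)
      · exact Or.inl (β.trans h1 (β.trans (β.symm g1) (β.trans (β.symm h2) g2)))

lemma merge_rel {β : Setoid (Fin n)} {a b x y : Fin n} :
    merge β a b x y ↔ β x y ∨ (β x a ∧ β b y) ∨ (β x b ∧ β a y) := Iff.rfl

lemma le_merge (β : Setoid (Fin n)) (a b : Fin n) : β ≤ merge β a b :=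
  fun _ _ h => Or.inl h

lemma merge_ab (β : Setoid (Fin n)) (a b : Fin n) : merge β a b a b :=
  Or.inr (Or.inl ⟨β.refl a, β.refl b⟩)

lemma merge_eq (β : Setoid (Fin n)) (a b : Fin n) :
    β ⊔ span {s(a,b)} = merge β a b := by
  refine le_antisymm (sup_le (le_merge β a b) (span_le.2 ?_)) ?_
  · intro x y hxy
    rcases Sym2.eq_iff.1 (Finset.mem_singleton.1 hxy) with ⟨rfl, rfl⟩ | ⟨rfl, rfl⟩
    · exact merge_ab β x y
    · exact (merge β y x).symm (merge_ab β y x)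
  · have hβ : β ≤ β ⊔ span {s(a,b)} := le_sup_left
    have hs : span ({s(a,b)} : Finset (Sym2 (Fin n))) ≤ β ⊔ span {s(a,b)} := le_sup_right
    have hab : (β ⊔ span {s(a,b)}) a b := hs (span_rel (Finset.mem_singleton_self _))
    rintro x y (h | ⟨h1, h2⟩ | ⟨h1, h2⟩)
    · exact hβ h
    · exact (β ⊔ span _).trans (hβ h1) ((β ⊔ span _).trans hab (hβ h2))
    · exact (β ⊔ span _).trans (hβ h1)
        ((β ⊔ span _).trans ((β ⊔ span _).symm hab) (hβ h2))

section CardMerge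

variable (β : Setoid (Fin n)) (a b : Fin n)

def qmap : Quotient β → Quotient (merge β a b) :=
  Quotient.map' id (fun _ _ h => le_merge β a b h)

lemma qmap_mk (x : Fin n) : qmap β a b (Quotient.mk β x) = Quotient.mk (merge β a b) x := rfl

def psi : Quotient (merge β a b) → Quotient β :=
  Quotient.lift (fun v => if merge β a b v b then Quotient.mk β a else Quotient.mk β v)
    (by
      intro v v' hvv'
      have hvv : merge β a b v v' := hvv'
      by_cases h2 : (merge β a b) v' b
      · have h1 : (merge β a b) v b := (merge β a b).trans hvv h2
        rw [if_pos h1, if_pos h2]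
      · have h1 : ¬ (merge β a b) v b :=
          fun hh => h2 ((merge β a b).trans ((merge β a b).symm hvv) hh)
        rw [if_neg h1, if_neg h2]
        rcases hvv with hb | ⟨g1, g2⟩ | ⟨g1, g2⟩
        · exact Quotient.sound hb
        · exact absurd (Or.inl (β.symm g2)) h2
        · exact absurd (Or.inl g1) h1)

lemma psi_mk (v : Fin n) :
    psi β a b (Quotient.mk (merge β a b) v)
      = if merge β a b v b then Quotient.mk β a else Quotient.mk β v := rfl

lemma card_merge (hab : ¬ β a b) :
    Nat.card (Quotient β) = Nat.card (Quotient (merge β a b)) + 1 := by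
  have e : Quotient β ≃ (Quotient (merge β a b) ⊕ Unit) := by
    refine
      { toFun := fun x => if x = Quotient.mk β b then Sum.inr Unit.unit else Sum.inl (qmap β a b x)
        invFun := Sum.elim (psi β a b) (fun _ => Quotient.mk β b)
        left_inv := ?_
        right_inv := ?_ }
    · intro x
      induction x using Quotient.inductionOn with
      | _ u =>
        dsimp only
        by_cases h : Quotient.mk β u = Quotient.mk β b
        · rw [if_pos h]; exact h.symm
        · rw [if_neg h]
          dsimp only [Sum.elim_inl]
          rw [qmap_mk, psi_mk]
          by_cases hm : merge β a b u b
          · rcases hm with hb | ⟨h1, _⟩ | ⟨h1, h2⟩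
            · exact absurd (Quotient.sound hb) h
            · have hm' : (merge β a b) u b := Or.inr (Or.inl ⟨h1, β.refl b⟩)
              rw [if_pos hm']
              exact Quotient.sound (β.symm h1)
            · exact absurd h2 hab
          · rw [if_neg hm]
    · intro y
      rcases y with y | u
      · induction y using Quotient.inductionOn with
        | _ v =>
          dsimp only [Sum.elim_inl]
          rw [psi_mk]
          by_cases hm : merge β a b v b
          · rw [if_pos hm]
            have hne : Quotient.mk β a ≠ Quotient.mk β b := fun hh => hab (Quotient.eq.1 hh)
            rw [if_neg hne, qmap_mk]
            exact congrArg Sum.inl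
              (Quotient.sound ((merge β a b).trans (merge_ab β a b) ((merge β a b).symm hm)))
          · rw [if_neg hm]
            have hne : Quotient.mk β v ≠ Quotient.mk β b :=
              fun hh => hm (le_merge β a b (Quotient.eq.1 hh))
            rw [if_neg hne, qmap_mk]
      · dsimp only [Sum.elim_inr]
        rw [if_pos rfl]
  rw [Nat.card_congr e, Nat.card_sum]
  simp

end CardMerge

def csum (β : Setoid (Fin n)) (E : Finset (Sym2 (Fin n))) (π : Setoid (Fin n)) : ℚ :=
  ∑ F ∈ E.powerset, if β ⊔ span F = π then (-1 : ℚ)^F.card else 0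

lemma sup_span_insert (β : Setoid (Fin n)) (e : Sym2 (Fin n)) (F : Finset (Sym2 (Fin n))) :
    β ⊔ span (insert e F) = (β ⊔ span {e}) ⊔ span F := by
  rw [span_insert, sup_assoc]

lemma csum_zero_of_loop {β π : Setoid (Fin n)} {E : Finset (Sym2 (Fin n))} {x y : Fin n}
    (hxy : s(x,y) ∈ E) (hβ : β x y) : csum β E π = 0 := by
  have hsp : span {s(x,y)} ≤ β := by
    refine span_le.2 fun u v huv => ?_
    rcases Sym2.eq_iff.1 (Finset.mem_singleton.1 huv) with ⟨rfl, rfl⟩ | ⟨rfl, rfl⟩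
    · exact hβ
    · exact β.symm hβ
  have habs : β ⊔ span {s(x,y)} = β := sup_eq_left.2 hsp
  unfold csum
  rw [← Finset.insert_erase hxy, Finset.sum_powerset_insert (Finset.notMem_erase _ _)]
  have : ∀ F ∈ (E.erase s(x,y)).powerset,
      (if β ⊔ span (insert s(x,y) F) = π then (-1 : ℚ)^(insert s(x,y) F).card else 0)
        = -(if β ⊔ span F = π then (-1 : ℚ)^F.card else 0) := by
    intro F hF
    have hne : s(x,y) ∉ F := fun hh => Finset.notMem_erase _ _ (Finset.mem_powerset.1 hF hh)
    rw [sup_span_insert, habs, Finset.card_insert_of_notMem hne, pow_succ]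
    split <;> ring
  rw [Finset.sum_congr rfl this]
  simp

lemma csum_zero_of_ne {β π : Setoid (Fin n)} {E : Finset (Sym2 (Fin n))}
    (hle : β ⊔ span E ≤ π) (hne : β ⊔ span E ≠ π) : csum β E π = 0 := by
  refine Finset.sum_eq_zero fun F hF => ?_
  rw [if_neg]
  intro h
  exact hne (le_antisymm hle (h ▸ sup_le_sup_left (span_mono (Finset.mem_powerset.1 hF)) β))

theorem csum_sign (E : Finset (Sym2 (Fin n))) : ∀ (β π : Setoid (Fin n)),
    (∀ x y, s(x,y) ∈ E → ¬ β x y) → β ⊔ span E = π →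
    0 < (-1:ℚ)^(Nat.card (Quotient β)) * (-1)^(Nat.card (Quotient π)) * csum β E π := by
  induction E using Finset.strongInduction with
  | _ E ih =>
  intro β π hnl hsp
  rcases E.eq_empty_or_nonempty with rfl | ⟨e, he⟩
  · rw [span_empty, sup_bot_eq] at hsp
    subst hsp
    have hc : csum β ∅ β = 1 := by
      unfold csum
      rw [Finset.powerset_empty, Finset.sum_singleton, if_pos (by rw [span_empty, sup_bot_eq]),
        Finset.card_empty, pow_zero]
    rw [hc, mul_one, ← pow_add]
    have hev : Even (Nat.card (Quotient β) + Nat.card (Quotient β)) := ⟨_, rfl⟩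
    rw [hev.neg_one_pow]
    norm_num
  · obtain ⟨a, b, rfl⟩ : ∃ a b, e = s(a,b) := Sym2.inductionOn e (fun x y => ⟨x, y, rfl⟩)
    have hab : ¬ β a b := hnl a b he
    set E' := E.erase (s(a,b)) with hE'
    have hE : E = insert (s(a,b)) E' := (Finset.insert_erase he).symm
    have hni : s(a,b) ∉ E' := Finset.notMem_erase _ _
    have hss : E' ⊂ E := Finset.erase_ssubset he
    have hsub : E' ⊆ E := Finset.erase_subset _ _
    have hnl' : ∀ x y, s(x,y) ∈ E' → ¬ β x y := fun x y h => hnl x y (hsub h)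
    have hreal' : (merge β a b) ⊔ span E' = π := by
      rw [← merge_eq, sup_assoc, ← span_insert, ← hE]; exact hsp
    have hsplit : csum β E π = csum β E' π - csum (merge β a b) E' π := by
      unfold csum
      rw [hE, Finset.sum_powerset_insert hni]
      have : ∀ F ∈ E'.powerset,
          (if β ⊔ span (insert s(a,b) F) = π then (-1 : ℚ)^(insert s(a,b) F).card else 0)
            = -(if merge β a b ⊔ span F = π then (-1 : ℚ)^F.card else 0) := by
        intro F hF
        have hne : s(a,b) ∉ F := fun hh => hni (Finset.mem_powerset.1 hF hh)
        rw [sup_span_insert, merge_eq, Finset.card_insert_of_notMem hne, pow_succ]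
        split <;> ring
      rw [Finset.sum_congr rfl this]
      rw [Finset.sum_neg_distrib]
      ring
    have hdle : β ⊔ span E' ≤ π := hsp ▸ sup_le_sup_left (span_mono hsub) β
    by_cases hloop : ∃ x y, s(x,y) ∈ E' ∧ (merge β a b) x y
    · -- Case A : contraction has a loop
      obtain ⟨x, y, hmem, hm⟩ := hloop
      have hc0 : csum (merge β a b) E' π = 0 := csum_zero_of_loop hmem hm
      -- show the deleted graph still spans π
      have hτ : (β ⊔ span E') a b := by
        have hτβ : β ≤ β ⊔ span E' := le_sup_left
        have hedge : (β ⊔ span E') x y :=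
          (le_sup_right : span E' ≤ β ⊔ span E') (span_rel hmem)
        rcases hm with h0 | ⟨h1, h2⟩ | ⟨h1, h2⟩
        · exact absurd h0 (hnl' x y hmem)
        · exact (β ⊔ span E').trans (hτβ (β.symm h1))
            ((β ⊔ span E').trans hedge (hτβ (β.symm h2)))
        · exact (β ⊔ span E').trans (hτβ h2)
            ((β ⊔ span E').trans ((β ⊔ span E').symm hedge) (hτβ h1))
      have hmle : merge β a b ≤ β ⊔ span E' := by
        have hτβ : β ≤ β ⊔ span E' := le_sup_left
        rintro u v (h0 | ⟨h1, h2⟩ | ⟨h1, h2⟩)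
        · exact hτβ h0
        · exact (β ⊔ span E').trans (hτβ h1) ((β ⊔ span E').trans hτ (hτβ h2))
        · exact (β ⊔ span E').trans (hτβ h1)
            ((β ⊔ span E').trans ((β ⊔ span E').symm hτ) (hτβ h2))
      have hdel : β ⊔ span E' = π := by
        refine le_antisymm hdle ?_
        rw [← hreal']
        exact sup_le hmle le_sup_right
      have hpos := ih E' hss β π hnl' hdel
      rw [hsplit, hc0, sub_zero]
      exact hpos
    · push_neg at hloop
      have hpos2 := ih E' hss (merge β a b) π (fun x y h hm => hloop x y h hm) hreal'
      have hcard : Nat.card (Quotient β) = Nat.card (Quotient (merge β a b)) + 1 :=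
        card_merge β a b hab
      have hsign : (-1:ℚ)^(Nat.card (Quotient β)) = -(-1:ℚ)^(Nat.card (Quotient (merge β a b))) := by
        rw [hcard, pow_succ]; ring
      by_cases hdel : β ⊔ span E' = π
      · have hpos1 := ih E' hss β π hnl' hdel
        rw [hsplit]
        have : (-1:ℚ)^(Nat.card (Quotient β)) * (-1)^(Nat.card (Quotient π)) *
            (csum β E' π - csum (merge β a b) E' π)
            = (-1:ℚ)^(Nat.card (Quotient β)) * (-1)^(Nat.card (Quotient π)) * csum β E' π
              + (-1:ℚ)^(Nat.card (Quotient (merge β a b))) * (-1)^(Nat.card (Quotient π)) *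
                csum (merge β a b) E' π := by
          rw [hsign]; ring
        rw [this]
        exact add_pos hpos1 hpos2
      · have hc0 : csum β E' π = 0 := csum_zero_of_ne hdle hdel
        rw [hsplit, hc0, zero_sub]
        have : (-1:ℚ)^(Nat.card (Quotient β)) * (-1)^(Nat.card (Quotient π)) *
            (-(csum (merge β a b) E' π))
            = (-1:ℚ)^(Nat.card (Quotient (merge β a b))) * (-1)^(Nat.card (Quotient π)) *
              csum (merge β a b) E' π := by
          rw [hsign]; ring
        rw [this]
        exact hpos2

section GraphAux
variable {G : SimpleGraph (Fin n)}

lemma connPart_eqvGen (G : SimpleGraph (Fin n)) (r : Fin n → Fin n → Prop)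
    (hr : ∀ x y, r x y → G.Adj x y) : connPart G (EqvGen.setoid r) := by
  intro b hb
  obtain ⟨j, rfl⟩ := hb
  set σ := EqvGen.setoid r with hσ
  have key : ∀ x y, EqvGen r x y →
      ∀ (hx : x ∈ {t | σ t j}) (hy : y ∈ {t | σ t j}),
        (G.induce {t | σ t j}).Reachable ⟨x, hx⟩ ⟨y, hy⟩ := by
    intro x y h
    induction h with
    | rel u v huv =>
        intro hx hy
        have : (G.induce {t | σ t j}).Adj ⟨u, hx⟩ ⟨v, hy⟩ := hr u v huv
        exact this.reachable
    | refl u => intro hx hy; exact SimpleGraph.Reachable.refl _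
    | symm u v h ihs => intro hx hy; exact (ihs hy hx).symm
    | trans u v w h1 h2 ih1 ih2 =>
        intro hx hy
        have hv : v ∈ {t | σ t j} := σ.trans (show σ v u from EqvGen.symm _ _ h1) hx
        exact (ih1 hx hv).trans (ih2 hv hy)
  haveI hne : Nonempty ({t | σ t j} : Set (Fin n)) := ⟨⟨j, σ.refl j⟩⟩
  refine ⟨fun u v => ?_⟩
  obtain ⟨x, hx⟩ := u
  obtain ⟨y, hy⟩ := v
  exact key x y (σ.trans hx (σ.symm hy)) hx hy

lemma walk_eqvGen {π : Setoid (Fin n)} {y : Fin n} :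
    ∀ {u v : ({t | π t y} : Set (Fin n))} (_ : (G.induce {t | π t y}).Walk u v),
      EqvGen (fun a b => G.Adj a b ∧ π a b) u.1 v.1 := by
  intro u v p
  induction p with
  | nil => exact EqvGen.refl _
  | @cons u w v hadj p ih =>
      refine EqvGen.trans _ _ _ (EqvGen.rel _ _ ⟨hadj, ?_⟩) ih
      exact π.trans u.2 (π.symm w.2)

lemma eqvGen_of_connPart {π : Setoid (Fin n)} (h : connPart G π)
    {x y : Fin n} (hxy : π x y) : EqvGen (fun u v => G.Adj u v ∧ π u v) x y := by
  have hb : ({t | π t y} : Set (Fin n)) ∈ π.classes := π.mem_classes y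
  have hx : x ∈ {t | π t y} := hxy
  have hy' : y ∈ {t | π t y} := π.refl y
  obtain ⟨p⟩ := (h _ hb).preconnected ⟨x, hx⟩ ⟨y, hy'⟩
  exact walk_eqvGen p

lemma eqvGen_ne_exists {r : Fin n → Fin n → Prop} :
    ∀ x y, EqvGen r x y → x ≠ y → ∃ u v, r u v := by
  intro x y h
  induction h with
  | rel u v h => exact fun _ => ⟨u, v, h⟩
  | refl u => exact fun h => absurd rfl h
  | symm u v _ ih => exact fun hne => ih (Ne.symm hne)
  | trans u v w _ _ ih1 ih2 =>
      intro hne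
      by_cases h : u = v
      · exact ih2 (h ▸ hne)
      · exact ih1 h

end GraphAux

section Assemble
variable {G : SimpleGraph (Fin n)} {π : Setoid (Fin n)}

def intern (π : Setoid (Fin n)) : Sym2 (Fin n) → Prop :=
  Sym2.lift ⟨fun x y => π x y, fun x y => propext ⟨fun h => π.symm h, fun h => π.symm h⟩⟩

def EGπ (G : SimpleGraph (Fin n)) (π : Setoid (Fin n)) : Finset (Sym2 (Fin n)) :=
  G.edgeFinset.filter (intern π)

lemma mem_EGπ {x y : Fin n} : s(x,y) ∈ EGπ G π ↔ G.Adj x y ∧ π x y := by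
  rw [EGπ, Finset.mem_filter, SimpleGraph.mem_edgeFinset, SimpleGraph.mem_edgeSet]
  exact and_congr_right fun _ => Iff.rfl

lemma adj_of_mem_edgeFinset {F : Finset (Sym2 (Fin n))} (hF : F ⊆ G.edgeFinset)
    {x y : Fin n} (h : s(x,y) ∈ F) : G.Adj x y :=
  (SimpleGraph.mem_edgeSet G).1 (SimpleGraph.mem_edgeFinset.1 (hF h))

lemma connPart_span {F : Finset (Sym2 (Fin n))} (hF : F ⊆ G.edgeFinset) :
    connPart G (span F) :=
  connPart_eqvGen G (eRel F) (fun x y h => adj_of_mem_edgeFinset hF h)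

lemma span_le_iff_subset {F : Finset (Sym2 (Fin n))} (hF : F ⊆ G.edgeFinset) :
    span F ≤ π ↔ F ⊆ EGπ G π := by
  constructor
  · intro h e he
    induction e using Sym2.ind with
    | _ x y => exact mem_EGπ.2 ⟨adj_of_mem_edgeFinset hF he, h (span_rel he)⟩
  · intro h
    exact span_le.2 fun x y hxy => (mem_EGπ.1 (h hxy)).2

lemma span_EGπ (hπ : connPart G π) : span (EGπ G π) = π := by
  refine le_antisymm (span_le.2 fun x y h => (mem_EGπ.1 h).2) ?_
  intro x y hxy
  exact EqvGen.mono (fun u v huv => show eRel (EGπ G π) u v from mem_EGπ.2 huv) _ _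
    (eqvGen_of_connPart hπ hxy)

lemma bot_of_forall {σ : Setoid (Fin n)} (h : ∀ x y, σ x y → x = y) : σ = ⊥ := by
  refine le_antisymm (fun x y hxy => ?_) bot_le
  exact h x y hxy

lemma not_bot_exists {σ : Setoid (Fin n)} (h : σ ≠ ⊥) : ∃ x y, σ x y ∧ x ≠ y := by
  by_contra hc
  push_neg at hc
  exact h (bot_of_forall fun x y hxy => by
    by_contra hne
    exact hne (hc x y hxy))

lemma EGπ_empty_iff (hπ : connPart G π) : EGπ G π = ∅ ↔ π = ⊥ := by
  constructor
  · intro h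
    by_contra hne
    obtain ⟨x, y, hxy, hxyne⟩ := not_bot_exists hne
    obtain ⟨u, v, huv⟩ := eqvGen_ne_exists x y (eqvGen_of_connPart hπ hxy) hxyne
    have : s(u,v) ∈ EGπ G π := mem_EGπ.2 huv
    rw [h] at this
    exact absurd this (Finset.notMem_empty _)
  · rintro rfl
    rw [Finset.eq_empty_iff_forall_notMem]
    intro e he
    induction e using Sym2.ind with
    | _ x y =>
      obtain ⟨hadj, hxy⟩ := mem_EGπ.1 he
      exact G.irrefl ((show x = y from hxy) ▸ hadj)

lemma sum_pows {γ : Type*} (s : Finset γ) :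
    ∑ F ∈ s.powerset, (-1:ℚ)^F.card = if s = ∅ then 1 else 0 := by
  have h := Finset.sum_powerset_neg_one_pow_card (x := s)
  have h2 := congrArg (Int.cast : ℤ → ℚ) h
  push_cast at h2
  rw [h2]

def Ncf (G : SimpleGraph (Fin n)) : Setoid (Fin n) → ℚ := fun σ => csum ⊥ G.edgeFinset σ

lemma Ncf_def (σ : Setoid (Fin n)) :
    Ncf G σ = ∑ F ∈ G.edgeFinset.powerset, if span F = σ then (-1:ℚ)^F.card else 0 := by
  unfold Ncf csum
  simp only [bot_sup_eq]

lemma key_a (hπ : connPart G π) :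
    (∑ σ : Setoid (Fin n), if σ ≤ π ∧ connPart G σ then Ncf G σ else 0)
      = if π = ⊥ then 1 else 0 := by
  have step1 : (∑ σ : Setoid (Fin n), if σ ≤ π ∧ connPart G σ then Ncf G σ else 0)
      = ∑ σ : Setoid (Fin n), ∑ F ∈ G.edgeFinset.powerset,
          if span F = σ then (if σ ≤ π ∧ connPart G σ then (-1:ℚ)^F.card else 0) else 0 := by
    refine Finset.sum_congr rfl fun σ _ => ?_
    by_cases hP : σ ≤ π ∧ connPart G σ
    · rw [if_pos hP, Ncf_def]
      exact Finset.sum_congr rfl fun F _ => by split <;> simp [hP]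
    · rw [if_neg hP]
      refine (Finset.sum_eq_zero fun F _ => by split <;> simp [hP]).symm
  rw [step1, Finset.sum_comm]
  have step2 : ∀ F ∈ G.edgeFinset.powerset,
      (∑ σ : Setoid (Fin n),
        if span F = σ then (if σ ≤ π ∧ connPart G σ then (-1:ℚ)^F.card else 0) else 0)
      = if F ⊆ EGπ G π then (-1:ℚ)^F.card else 0 := by
    intro F hF
    rw [Finset.sum_ite_eq, if_pos (Finset.mem_univ _)]
    have hsubE : F ⊆ G.edgeFinset := Finset.mem_powerset.1 hF
    by_cases hle : F ⊆ EGπ G π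
    · rw [if_pos hle, if_pos ⟨(span_le_iff_subset hsubE).2 hle, connPart_span hsubE⟩]
    · rw [if_neg hle, if_neg]
      intro ⟨h1, _⟩
      exact hle ((span_le_iff_subset hsubE).1 h1)
  rw [Finset.sum_congr rfl step2]
  have step3 : (∑ F ∈ G.edgeFinset.powerset, if F ⊆ EGπ G π then (-1:ℚ)^F.card else 0)
      = ∑ F ∈ (EGπ G π).powerset, (-1:ℚ)^F.card := by
    rw [← Finset.sum_filter]
    refine Finset.sum_congr ?_ fun _ _ => rfl
    ext F
    simp only [Finset.mem_filter, Finset.mem_powerset]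
    exact ⟨fun h => h.2, fun h => ⟨h.trans (Finset.filter_subset _ _), h⟩⟩
  rw [step3, sum_pows]
  by_cases h : π = ⊥
  · rw [if_pos ((EGπ_empty_iff hπ).2 h), if_pos h]
  · rw [if_neg (fun hh => h ((EGπ_empty_iff hπ).1 hh)), if_neg h]

end Assemble


/-- the Moebius function of the lattice of contractions L_G never
vanishes from the bottom, and Y_G = sum over connected partitions pi of
mu_L(bot, pi) p_pi.  Here `ML pi` plays the role of mu_L(bot, pi). -/
theorem YG_eq_moebius_sum (n : ℕ) (G : SimpleGraph (Fin n)) (ML : Setoid (Fin n) → ℚ)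
    (hML : ∀ π : Setoid (Fin n), connPart G π →
      (∑ σ : Setoid (Fin n), if σ ≤ π ∧ connPart G σ then ML σ else 0)
        = if π = ⊥ then 1 else 0) :
    (∀ π : Setoid (Fin n), connPart G π → ML π ≠ 0) ∧
    YG G = ∑ π : Setoid (Fin n), if connPart G π then ML π • pfun π else 0 := by
  have huniq : ∀ π : Setoid (Fin n), connPart G π → ML π = Ncf G π := by
    intro π
    induction π using WellFoundedLT.induction with
    | _ π ih =>
    intro hπ
    have h1 := hML π hπ
    have h2 := key_a (G := G) hπ
    rw [← Finset.add_sum_erase _ _ (Finset.mem_univ π), if_pos ⟨le_rfl, hπ⟩] at h1 h2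
    have hrest : (∑ σ ∈ Finset.univ.erase π, if σ ≤ π ∧ connPart G σ then ML σ else 0)
        = ∑ σ ∈ Finset.univ.erase π, if σ ≤ π ∧ connPart G σ then Ncf G σ else 0 := by
      refine Finset.sum_congr rfl fun σ hσ => ?_
      by_cases hc : σ ≤ π ∧ connPart G σ
      · rw [if_pos hc, if_pos hc, ih σ (lt_of_le_of_ne hc.1 (Finset.ne_of_mem_erase hσ)) hc.2]
      · rw [if_neg hc, if_neg hc]
    rw [hrest] at h1
    rw [← h2] at h1
    linarith [h1]
  constructor
  · intro π hπ
    have hnl : ∀ x y : Fin n, s(x,y) ∈ EGπ G π → ¬ (⊥ : Setoid (Fin n)) x y :=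
      fun x y hm hxy => (mem_EGπ.1 hm).1.ne (hxy : x = y)
    have hsp : (⊥ : Setoid (Fin n)) ⊔ span (EGπ G π) = π := by
      rw [bot_sup_eq, span_EGπ hπ]
    have hpos := csum_sign (EGπ G π) ⊥ π hnl hsp
    have hNc : Ncf G π = csum ⊥ (EGπ G π) π := by
      unfold Ncf csum
      refine (Finset.sum_subset (Finset.powerset_mono.2 (Finset.filter_subset _ _)) ?_).symm
      intro F hF hnF
      rw [if_neg]
      intro hc
      rw [bot_sup_eq] at hc
      exact hnF (Finset.mem_powerset.2
        ((span_le_iff_subset (Finset.mem_powerset.1 hF)).1 hc.le))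
    rw [huniq π hπ, hNc]
    intro h0
    rw [h0, mul_zero] at hpos
    exact lt_irrefl 0 hpos
  · funext w
    set μ : Setoid (Fin n) := EqvGen.setoid (fun x y : Fin n => G.Adj x y ∧ w x = w y) with hμ
    have hμconn : connPart G μ := connPart_eqvGen G _ (fun x y h => h.1)
    have hμker : ∀ x y : Fin n, EqvGen (fun u v => G.Adj u v ∧ w u = w v) x y → w x = w y := by
      intro x y h
      induction h with
      | rel u v h => exact h.2
      | refl u => rfl
      | symm u v _ ih => exact ih.symm
      | trans u v t _ _ ih1 ih2 => exact ih1.trans ih2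
    have hiff : ∀ π' : Setoid (Fin n), connPart G π' →
        ((∀ i j : Fin n, π'.r i j → w i = w j) ↔ π' ≤ μ) := by
      intro π' hconn
      constructor
      · intro hk x y hxy
        exact EqvGen.mono (fun u v huv => ⟨huv.1, hk u v huv.2⟩) _ _
          (eqvGen_of_connPart hconn hxy)
      · intro hle i j hij
        exact hμker i j (hle hij)
    have hsum : (∑ π' : Setoid (Fin n), if connPart G π' then ML π' • pfun π' else 0) w
        = ∑ π' : Setoid (Fin n), if π' ≤ μ ∧ connPart G π' then ML π' else 0 := by
      rw [Finset.sum_apply]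
      refine Finset.sum_congr rfl fun π' _ => ?_
      by_cases hc : connPart G π'
      · rw [if_pos hc]
        by_cases hk : ∀ i j : Fin n, π'.r i j → w i = w j
        · rw [if_pos ⟨(hiff π' hc).1 hk, hc⟩]
          rw [Pi.smul_apply, pfun, if_pos hk, smul_eq_mul, mul_one]
        · rw [if_neg (fun hh => hk ((hiff π' hc).2 hh.1))]
          rw [Pi.smul_apply, pfun, if_neg hk, smul_eq_mul, mul_zero]
      · rw [if_neg hc, if_neg (fun hh => hc hh.2)]
        rfl
    rw [hsum, hML μ hμconn]
    unfold YG
    by_cases hp : ∀ i j : Fin n, G.Adj i j → w i ≠ w j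
    · rw [if_pos hp, if_pos]
      refine bot_of_forall fun x y hxy => ?_
      have key : ∀ x y : Fin n, EqvGen (fun u v => G.Adj u v ∧ w u = w v) x y → x = y := by
        intro x y h
        induction h with
        | rel u v h => exact absurd h.2 (hp u v h.1)
        | refl u => rfl
        | symm u v _ ih => exact ih.symm
        | trans u v t _ _ ih1 ih2 => exact ih1.trans ih2
      exact key x y hxy
    · rw [if_neg hp, if_neg]
      push_neg at hp
      obtain ⟨i, j, hadj, heq⟩ := hp
      intro hb
      have hij : μ i j := EqvGen.rel _ _ ⟨hadj, heq⟩
      rw [hb] at hij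
      exact hadj.ne (hij : i = j)

end
end

section
/- For any graph G with vertex set [n], Y_G = Σ_{S ⊆ E(G)} (-1)^{|S|} p_{π(S)}, where π(S) is the set partition of [n] whose blocks are the vertex sets of the connected components of the spanning subgraph (V(G), S). -/
open scoped Classical
noncomputable section

/-- The set partition of the vertices into connected components of the spanning
subgraph with edge set S. -/
def compSetoid {n : ℕ} (S : Finset (Sym2 (Fin n))) : Setoid (Fin n) :=
  (SimpleGraph.fromEdgeSet (↑S)).reachableSetoid


lemma reach_const {n : ℕ} (S : Finset (Sym2 (Fin n))) (w : Fin n → ℕ) :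
    (∀ i j : Fin n, (compSetoid S).r i j → w i = w j) ↔
      ∀ i j : Fin n, s(i, j) ∈ S → w i = w j := by
  constructor
  · intro h i j hij
    by_cases hij' : i = j
    · rw [hij']
    · exact h i j (((SimpleGraph.fromEdgeSet_adj _).mpr
        ⟨Finset.mem_coe.mpr hij, hij'⟩).reachable)
  · intro h i j hr
    obtain ⟨p⟩ := hr
    induction p with
    | nil => rfl
    | cons hadj p ih =>
      rw [SimpleGraph.fromEdgeSet_adj] at hadj
      exact (h _ _ (Finset.mem_coe.mp hadj.1)).trans ih

lemma neg_one_pow_sum (α : Type*) [DecidableEq α] (x : Finset α) :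
    (∑ m ∈ x.powerset, (-1 : ℚ) ^ m.card) = if x = ∅ then 1 else 0 := by
  have := @Finset.sum_powerset_neg_one_pow_card α _ x
  have h2 : ((∑ m ∈ x.powerset, (-1 : ℤ) ^ m.card : ℤ) : ℚ)
      = ∑ m ∈ x.powerset, (-1 : ℚ) ^ m.card := by push_cast; rfl
  rw [← h2, this]
  split <;> norm_num

/-- Y_G = sum over S subseteq E(G) of (-1)^|S| p_{pi(S)}. -/
theorem YG_powersum_expansion (n : ℕ) (G : SimpleGraph (Fin n)) :
    YG G = ∑ S : Finset (Sym2 (Fin n)),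
      if (↑S : Set (Sym2 (Fin n))) ⊆ G.edgeSet
      then ((-1 : ℚ) ^ S.card) • pfun (compSetoid S) else 0 := by
  funext w
  set M : Finset (Sym2 (Fin n)) := Finset.univ.filter
    (fun e => e ∈ G.edgeSet ∧ ∀ i j : Fin n, e = s(i, j) → w i = w j) with hM
  have hterm : ∀ S : Finset (Sym2 (Fin n)),
      (if (↑S : Set (Sym2 (Fin n))) ⊆ G.edgeSet
        then ((-1 : ℚ) ^ S.card) • pfun (compSetoid S) else 0) w
      = if S ∈ M.powerset then (-1 : ℚ) ^ S.card else 0 := by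
    intro S
    by_cases hmem : S ∈ M.powerset
    · have hsub := Finset.mem_powerset.mp hmem
      have hE : (↑S : Set (Sym2 (Fin n))) ⊆ G.edgeSet := fun e he =>
        ((Finset.mem_filter.mp (hsub (Finset.mem_coe.mp he))).2).1
      rw [if_pos hmem, if_pos hE]
      have hp : pfun (compSetoid S) w = 1 := by
        rw [pfun, if_pos]
        refine (reach_const S w).mpr ?_
        intro i j hij
        exact ((Finset.mem_filter.mp (hsub hij)).2).2 i j rfl
      simp [hp]
    · rw [if_neg hmem]
      by_cases hE : (↑S : Set (Sym2 (Fin n))) ⊆ G.edgeSet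
      · rw [if_pos hE]
        have hp : pfun (compSetoid S) w = 0 := by
          rw [pfun, if_neg]
          intro hc
          apply hmem
          rw [Finset.mem_powerset]
          intro e he
          rw [hM, Finset.mem_filter]
          refine ⟨Finset.mem_univ _, hE (Finset.mem_coe.mpr he), ?_⟩
          intro i j hij
          subst hij
          exact (reach_const S w).mp hc i j he
        simp [hp]
      · rw [if_neg hE]; rfl
  rw [Finset.sum_apply]
  rw [Finset.sum_congr rfl (fun S _ => hterm S)]
  have hs : ∑ S : Finset (Sym2 (Fin n)), (if S ∈ M.powerset then (-1 : ℚ) ^ S.card else 0)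
      = ∑ S ∈ M.powerset, (-1 : ℚ) ^ S.card := by
    rw [Finset.sum_ite_mem, Finset.univ_inter]
  rw [hs, neg_one_pow_sum]
  by_cases hM0 : M = ∅
  · rw [if_pos hM0, YG, if_pos]
    intro i j hadj hw
    have hm : s(i, j) ∈ M := by
      rw [hM, Finset.mem_filter]
      refine ⟨Finset.mem_univ _, (SimpleGraph.mem_edgeSet G).mpr hadj, ?_⟩
      intro a b hab
      rcases Sym2.eq_iff.mp hab with ⟨h1, h2⟩ | ⟨h1, h2⟩
      · rw [← h1, ← h2]; exact hw
      · rw [← h1, ← h2]; exact hw.symm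
    simp [hM0] at hm
  · rw [if_neg hM0, YG, if_neg]
    obtain ⟨e, he⟩ := Finset.nonempty_iff_ne_empty.mpr hM0
    revert he
    refine Sym2.ind (fun i j he => ?_) e
    rw [hM, Finset.mem_filter] at he
    intro hc
    exact hc i j ((SimpleGraph.mem_edgeSet G).mp he.2.1) (he.2.2 i j rfl)


end
end

section
/- Let G be a graph whose edges ε_1, ε_2, ε_3 form a triangle. Then Y_G = Y_{G-ε_1} + Y_{G-ε_2} - Y_{G-{ε_1,ε_2}}. -/
open scoped Classical
noncomputable section

/-- triple deletion.  If a, b, c form a triangle in G with edges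
eps1 = {a,b}, eps2 = {b,c}, eps3 = {a,c}, then
Y_G = Y_{G - eps1} + Y_{G - eps2} - Y_{G - {eps1, eps2}}. -/
theorem triple_deletion (n : ℕ) (G : SimpleGraph (Fin n)) (a b c : Fin n)
    (hab : G.Adj a b) (hbc : G.Adj b c) (hac : G.Adj a c) :
    YG G = YG (G.deleteEdges {s(a, b)}) + YG (G.deleteEdges {s(b, c)})
            - YG (G.deleteEdges {s(a, b), s(b, c)}) := by
  funext w
  have hab' : a ≠ b := hab.ne
  have hbc' : b ≠ c := hbc.ne
  have hac' : a ≠ c := hac.ne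
  simp only [YG, Pi.add_apply, Pi.sub_apply]
  by_cases h12 : ∀ i j : Fin n, (G.deleteEdges {s(a,b), s(b,c)}).Adj i j → w i ≠ w j
  · have hwac : w a ≠ w c := by
      apply h12 a c
      rw [SimpleGraph.deleteEdges_adj]
      refine ⟨hac, ?_⟩
      simp only [Set.mem_insert_iff, Set.mem_singleton_iff, Sym2.eq_iff]
      tauto
    have key : ∀ i j : Fin n, G.Adj i j → ¬ (G.deleteEdges {s(a,b), s(b,c)}).Adj i j →
        ((i = a ∧ j = b) ∨ (i = b ∧ j = a)) ∨ ((i = b ∧ j = c) ∨ (i = c ∧ j = b)) := by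
      intro i j hij hnij
      rw [SimpleGraph.deleteEdges_adj] at hnij
      simp only [not_and, not_not, Set.mem_insert_iff, Set.mem_singleton_iff,
        Sym2.eq_iff] at hnij
      exact hnij hij
    rw [if_pos h12]
    have h1iff : (∀ i j : Fin n, (G.deleteEdges {s(a,b)}).Adj i j → w i ≠ w j) ↔ w b ≠ w c := by
      constructor
      · intro h
        apply h b c
        rw [SimpleGraph.deleteEdges_adj]
        refine ⟨hbc, ?_⟩
        simp only [Set.mem_singleton_iff, Sym2.eq_iff]
        tauto
      · intro hwbc i j hij
        rw [SimpleGraph.deleteEdges_adj] at hij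
        simp only [Set.mem_singleton_iff, Sym2.eq_iff] at hij
        by_cases hd : (G.deleteEdges {s(a,b), s(b,c)}).Adj i j
        · exact h12 i j hd
        · rcases key i j hij.1 hd with (⟨rfl, rfl⟩ | ⟨rfl, rfl⟩) | (⟨rfl, rfl⟩ | ⟨rfl, rfl⟩)
          · exact absurd (Or.inl ⟨rfl, rfl⟩) hij.2
          · exact absurd (Or.inr ⟨rfl, rfl⟩) hij.2
          · exact hwbc
          · exact fun h => hwbc h.symm
    have h2iff : (∀ i j : Fin n, (G.deleteEdges {s(b,c)}).Adj i j → w i ≠ w j) ↔ w a ≠ w b := by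
      constructor
      · intro h
        apply h a b
        rw [SimpleGraph.deleteEdges_adj]
        refine ⟨hab, ?_⟩
        simp only [Set.mem_singleton_iff, Sym2.eq_iff]
        tauto
      · intro hwab i j hij
        rw [SimpleGraph.deleteEdges_adj] at hij
        simp only [Set.mem_singleton_iff, Sym2.eq_iff] at hij
        by_cases hd : (G.deleteEdges {s(a,b), s(b,c)}).Adj i j
        · exact h12 i j hd
        · rcases key i j hij.1 hd with (⟨rfl, rfl⟩ | ⟨rfl, rfl⟩) | (⟨rfl, rfl⟩ | ⟨rfl, rfl⟩)
          · exact hwab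
          · exact fun h => hwab h.symm
          · exact absurd (Or.inl ⟨rfl, rfl⟩) hij.2
          · exact absurd (Or.inr ⟨rfl, rfl⟩) hij.2
    have hGiff : (∀ i j : Fin n, G.Adj i j → w i ≠ w j) ↔ (w a ≠ w b ∧ w b ≠ w c) := by
      constructor
      · intro h
        exact ⟨h a b hab, h b c hbc⟩
      · rintro ⟨hwab, hwbc⟩ i j hij
        by_cases hd : (G.deleteEdges {s(a,b), s(b,c)}).Adj i j
        · exact h12 i j hd
        · rcases key i j hij hd with (⟨rfl, rfl⟩ | ⟨rfl, rfl⟩) | (⟨rfl, rfl⟩ | ⟨rfl, rfl⟩)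
          · exact hwab
          · exact fun h => hwab h.symm
          · exact hwbc
          · exact fun h => hwbc h.symm
    by_cases hwab : w a = w b <;> by_cases hwbc : w b = w c
    · exact absurd (hwab.trans hwbc) hwac
    · rw [if_neg (fun h => (hGiff.1 h).1 hwab), if_pos (h1iff.mpr hwbc),
        if_neg (fun h => (h2iff.1 h) hwab)]
      ring
    · rw [if_neg (fun h => (hGiff.1 h).2 hwbc), if_neg (fun h => (h1iff.1 h) hwbc),
        if_pos (h2iff.mpr hwab)]
      ring
    · rw [if_pos (hGiff.mpr ⟨hwab, hwbc⟩), if_pos (h1iff.mpr hwbc), if_pos (h2iff.mpr hwab)]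
      ring
  · have mono : ∀ (s t : Set (Sym2 (Fin n))), s ⊆ t →
        (∀ i j : Fin n, (G.deleteEdges s).Adj i j → w i ≠ w j) →
        (∀ i j : Fin n, (G.deleteEdges t).Adj i j → w i ≠ w j) := by
      intro s t hst h i j hij
      rw [SimpleGraph.deleteEdges_adj] at hij
      exact h i j (SimpleGraph.deleteEdges_adj.mpr ⟨hij.1, fun hm => hij.2 (hst hm)⟩)
    have hG : ¬ ∀ i j : Fin n, G.Adj i j → w i ≠ w j := fun h =>
      h12 fun i j hij => h i j (SimpleGraph.deleteEdges_adj.1 hij).1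
    have h1 : ¬ ∀ i j : Fin n, (G.deleteEdges {s(a,b)}).Adj i j → w i ≠ w j := fun h =>
      h12 (mono _ _ (Set.singleton_subset_iff.mpr (Set.mem_insert _ _)) h)
    have h2 : ¬ ∀ i j : Fin n, (G.deleteEdges {s(b,c)}).Adj i j → w i ≠ w j := fun h =>
      h12 (mono _ _ (Set.singleton_subset_iff.mpr (Set.mem_insert_of_mem _ rfl)) h)
    rw [if_neg hG, if_neg h1, if_neg h2, if_neg h12]
    ring

end
end

section
/- For a graph G with vertex labels in [n] and an edge ε between the vertices labelled n and n-1, Y_G = Y_{G-ε} - (Y_{G/ε})↑, where in G/ε the merged vertex is labelled n-1 and ↑ is the linear operator on degree n-1 monomials sending x_{i_1}···x_{i_{n-1}} to x_{i_1}···x_{i_{n-1}} x_{i_{n-1}}. -/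
open scoped Classical
noncomputable section

/-- The induction operator: duplicate the last variable of each monomial. -/
def up {m : ℕ} (f : NCF (m + 1)) : NCF (m + 2) :=
  fun w => if w (Fin.last (m + 1)) = w ((Fin.last m).castSucc) then f (Fin.init w) else 0

/-- Contraction of the edge between the top two vertices of a graph on
n + 2 vertices; the merged vertex is the new top vertex. -/
def contractLast {n : ℕ} (G : SimpleGraph (Fin (n + 2))) : SimpleGraph (Fin (n + 1)) where
  Adj x y := x ≠ y ∧ (G.Adj x.castSucc y.castSucc
      ∨ (x = Fin.last n ∧ G.Adj (Fin.last (n + 1)) y.castSucc)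
      ∨ (y = Fin.last n ∧ G.Adj x.castSucc (Fin.last (n + 1))))
  symm := by
    constructor
    rintro x y ⟨hxy, h⟩
    refine ⟨hxy.symm, ?_⟩
    rcases h with h | ⟨hx, h⟩ | ⟨hy, h⟩
    · exact Or.inl h.symm
    · exact Or.inr (Or.inr ⟨hx, h.symm⟩)
    · exact Or.inr (Or.inl ⟨hy, h.symm⟩)
  loopless := by constructor; rintro x ⟨h, -⟩; exact h rfl

/-- deletion-contraction.  For an edge eps between the two
top-labelled vertices, Y_G = Y_{G - eps} - (Y_{G/eps}) induced. -/
theorem deletion_contraction (n : ℕ) (G : SimpleGraph (Fin (n + 2)))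
    (hε : G.Adj ((Fin.last n).castSucc) (Fin.last (n + 1))) :
    YG G = YG (G.deleteEdges {s((Fin.last n).castSucc, Fin.last (n + 1))})
            - up (YG (contractLast G)) := by
  funext w
  simp only [Pi.sub_apply, YG, up]
  have hlt : ∀ x : Fin (n + 1), x.castSucc ≠ Fin.last (n + 1) := fun x =>
    Fin.ne_of_lt (Fin.castSucc_lt_last x)
  by_cases heq : w (Fin.last (n + 1)) = w ((Fin.last n).castSucc)
  · rw [if_pos heq]
    have hG : ¬ (∀ i j, G.Adj i j → w i ≠ w j) := fun h => h _ _ hε heq.symm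
    rw [if_neg hG]
    have hdel : ∀ i j : Fin (n + 2), (G.deleteEdges
        {s((Fin.last n).castSucc, Fin.last (n + 1))}).Adj i j ↔
        G.Adj i j ∧ ¬ s(i, j) = s((Fin.last n).castSucc, Fin.last (n + 1)) := by
      intro i j
      rw [SimpleGraph.deleteEdges_adj, Set.mem_singleton_iff]
    have key : (∀ i j, (G.deleteEdges
          {s((Fin.last n).castSucc, Fin.last (n + 1))}).Adj i j → w i ≠ w j) ↔
        (∀ x y, (contractLast G).Adj x y → Fin.init w x ≠ Fin.init w y) := by
      constructor
      · intro h x y hxy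
        obtain ⟨hne, hadj⟩ := hxy
        rcases hadj with hadj | ⟨hx, hadj⟩ | ⟨hy, hadj⟩
        · refine h _ _ ((hdel _ _).mpr ⟨hadj, ?_⟩)
          intro hcon
          rw [Sym2.eq_iff] at hcon
          rcases hcon with ⟨-, h2⟩ | ⟨h1, -⟩
          · exact hlt y h2
          · exact hlt x h1
        · have hd : (G.deleteEdges
              {s((Fin.last n).castSucc, Fin.last (n + 1))}).Adj
              (Fin.last (n + 1)) y.castSucc := by
            refine (hdel _ _).mpr ⟨hadj, ?_⟩
            intro hcon
            rw [Sym2.eq_iff] at hcon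
            rcases hcon with ⟨h1, -⟩ | ⟨-, h2⟩
            · exact hlt (Fin.last n) h1.symm
            · exact hne (hx.trans (Fin.castSucc_injective _ h2).symm)
          have := h _ _ hd
          simp only [Fin.init, hx]
          intro hc
          exact this (heq.trans hc)
        · have hd : (G.deleteEdges
              {s((Fin.last n).castSucc, Fin.last (n + 1))}).Adj
              x.castSucc (Fin.last (n + 1)) := by
            refine (hdel _ _).mpr ⟨hadj, ?_⟩
            intro hcon
            rw [Sym2.eq_iff] at hcon
            rcases hcon with ⟨h1, -⟩ | ⟨h1, -⟩
            · exact hne ((Fin.castSucc_injective _ h1).trans hy.symm)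
            · exact hlt x h1
          have := h _ _ hd
          simp only [Fin.init, hy]
          intro hc
          exact this (hc.trans heq.symm)
      · intro h i j hij
        obtain ⟨hadj, hmem⟩ := (hdel _ _).mp hij
        simp only [Sym2.eq, Sym2.rel_iff', Prod.mk.injEq,
          Prod.swap_prod_mk, not_or, not_and] at hmem
        obtain ⟨hm1, hm2⟩ := hmem
        induction i using Fin.lastCases with
        | last =>
          induction j using Fin.lastCases with
          | last => exact absurd hadj (G.loopless.irrefl _)
          | cast y =>
            have hy : y ≠ Fin.last n := by
              intro hc
              exact hm2 rfl (by rw [hc])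
            have := h (Fin.last n) y ⟨Ne.symm hy, Or.inr (Or.inl ⟨rfl, hadj⟩)⟩
            simp only [Fin.init] at this
            intro hc
            exact this (heq.symm.trans hc)
        | cast x =>
          induction j using Fin.lastCases with
          | last =>
            have hx : x ≠ Fin.last n := by
              intro hc
              exact (hm1 (by rw [hc])) rfl
            have := h x (Fin.last n) ⟨hx, Or.inr (Or.inr ⟨rfl, hadj⟩)⟩
            simp only [Fin.init] at this
            intro hc
            exact this (hc.trans heq)
          | cast y =>
            have hxy : x ≠ y := fun hc => G.loopless.irrefl _ (hc ▸ hadj)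
            exact h x y ⟨hxy, Or.inl hadj⟩
    by_cases hk : ∀ x y, (contractLast G).Adj x y → Fin.init w x ≠ Fin.init w y
    · rw [if_pos (key.mpr hk), if_pos hk]; norm_num
    · rw [if_neg (fun h => hk (key.mp h)), if_neg hk]; norm_num
  · rw [if_neg heq, sub_zero]
    have key : (∀ i j, G.Adj i j → w i ≠ w j) ↔
        (∀ i j, (G.deleteEdges
          {s((Fin.last n).castSucc, Fin.last (n + 1))}).Adj i j → w i ≠ w j) := by
      constructor
      · intro h i j hij
        exact h i j (SimpleGraph.deleteEdges_adj.mp hij).1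
      · intro h i j hij
        by_cases hm : s(i, j) = s((Fin.last n).castSucc, Fin.last (n + 1))
        · simp only [Sym2.eq, Sym2.rel_iff', Prod.mk.injEq,
            Prod.swap_prod_mk] at hm
          rcases hm with ⟨h1, h2⟩ | ⟨h1, h2⟩
          · rw [h1, h2]; exact fun hc => heq hc.symm
          · rw [h1, h2]; exact heq
        · exact h i j (SimpleGraph.deleteEdges_adj.mpr ⟨hij, hm⟩)
    by_cases hk : ∀ i j, G.Adj i j → w i ≠ w j
    · rw [if_pos hk, if_pos (key.mp hk)]
    · rw [if_neg hk, if_neg (fun h => hk (key.mpr h))]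

end
end

section
/- For π ⊢ [n-1], the power sum in noncommuting variables satisfies p_π↑ = p_{π⊕n}, where π⊕n is π with n added to the block containing n-1, and ↑ duplicates the last variable of each monomial. -/
open scoped Classical
noncomputable section

/-- The partition pi ⊕ n of [n] obtained from pi ⊢ [n-1] by putting n in the
block of n-1: pull back pi along the map collapsing the last two elements. -/
def oplus {m : ℕ} (π : Setoid (Fin (m + 1))) : Setoid (Fin (m + 2)) :=
  Setoid.comap (fun i : Fin (m + 2) => Fin.lastCases (Fin.last m) (fun j => j) i) π

/-- p_pi induced = p_{pi ⊕ n}. -/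
theorem pfun_up (m : ℕ) (π : Setoid (Fin (m + 1))) :
    up (pfun π) = pfun (oplus π) := by
  funext w
  simp only [up, pfun, oplus, Setoid.comap]
  by_cases hlast : w (Fin.last (m + 1)) = w ((Fin.last m).castSucc)
  · rw [if_pos hlast]
    congr 1
    apply propext
    constructor
    · intro h i j hij
      -- reduce to statement about collapsed indices
      have key : ∀ k : Fin (m + 2),
          w k = Fin.init w (Fin.lastCases (Fin.last m) (fun j : Fin (m+1) => j) k) := by
        intro k
        refine Fin.lastCases ?_ ?_ k
        · simp [Fin.init, hlast]
        · intro j; simp [Fin.init]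
      rw [key i, key j]
      exact h _ _ hij
    · intro h i j hij
      have := h i.castSucc j.castSucc (by show π _ _; simpa [Function.onFun] using hij)
      simpa [Fin.init] using this
  · rw [if_neg hlast]
    rw [eq_comm, if_neg]
    intro h
    have := h (Fin.last (m + 1)) ((Fin.last m).castSucc)
      (by show π _ _; simpa [Function.onFun] using π.iseqv.refl (Fin.last m))
    exact hlast this

end
end

section
/- For a tree T with vertex labels in [n], Y_T = (-1)^{n-1} Σ_σ x_σ, summed over set partitions σ ⊢ [n] such that S_σ = E(T) and no block consisting of a single vertex is a leaf of T, where S_σ is the set of all edges lying on a path between two vertices in the same block of σ, and x_σ is the Schur function in noncommuting variables. -/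
open scoped Classical
noncomputable section

/-- A leaf of a graph: a vertex with exactly one neighbour. -/
def IsLeaf {n : ℕ} (T : SimpleGraph (Fin n)) (v : Fin n) : Prop := ∃! u, T.Adj v u

/-- S_sigma: the set of edges of T lying on a path between two vertices in a
common block of sigma (in a tree: the edges whose removal disconnects two
vertices in a common block). -/
def pathEdges {n : ℕ} (T : SimpleGraph (Fin n)) (σ : Setoid (Fin n)) : Set (Sym2 (Fin n)) :=
  {e | e ∈ T.edgeSet ∧ ∃ u v : Fin n, σ.r u v ∧ ¬ (T.deleteEdges {e}).Reachable u v}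

section Aux
open SimpleGraph
variable {n : ℕ}

lemma path_edge_disconnects {T : SimpleGraph (Fin n)} (hT : T.IsAcyclic)
    {u v : Fin n} (p : T.Walk u v) (hp : p.IsPath) {e : Sym2 (Fin n)}
    (he : e ∈ p.edges) : ¬ (T.deleteEdges {e}).Reachable u v := by
  induction p with
  | nil => simp at he
  | @cons u x v h q ih =>
    rw [SimpleGraph.Walk.edges_cons, List.mem_cons] at he
    have hnd := hp.edges_nodup
    rw [SimpleGraph.Walk.edges_cons, List.nodup_cons] at hnd
    rcases he with rfl | he'
    · -- e is the first edge; it is a bridge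
      have hb : T.IsBridge s(u, x) := isAcyclic_iff_forall_adj_isBridge.mp hT h
      rw [isBridge_iff] at hb
      intro hr
      have hq : (T.deleteEdges {s(u,x)}).Reachable x v :=
        ⟨q.toDeleteEdges _ (fun e' he' hmem => hnd.1 (by
          rw [Set.mem_singleton_iff] at hmem; rw [← hmem]; exact he'))⟩
      exact hb ((hr.trans hq.symm) : _)
    · intro hr
      have hax : (T.deleteEdges {e}).Adj u x := by
        rw [deleteEdges_adj]
        refine ⟨h, ?_⟩
        simp only [Set.mem_singleton_iff]
        intro hcontra
        exact hnd.1 (hcontra ▸ he')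
      exact ih hp.of_cons he' ((hax.reachable.symm.trans hr) : _)

/-- Setoid of connectivity of an edge subset. -/
def csetoid (S : Finset (Sym2 (Fin n))) : Setoid (Fin n) :=
  ⟨(SimpleGraph.fromEdgeSet (↑S : Set (Sym2 (Fin n)))).Reachable,
    ⟨fun _ => SimpleGraph.Reachable.refl _, SimpleGraph.Reachable.symm,
      SimpleGraph.Reachable.trans⟩⟩

lemma le_csetoid_iff {T : SimpleGraph (Fin n)} (hT : T.IsTree) (σ : Setoid (Fin n))
    (S : Finset (Sym2 (Fin n))) (hS : (↑S : Set (Sym2 (Fin n))) ⊆ T.edgeSet) :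
    σ ≤ csetoid S ↔ pathEdges T σ ⊆ ↑S := by
  constructor
  · intro h e he
    obtain ⟨heE, u, v, huv, hnr⟩ := he
    by_contra heS
    have hr : (SimpleGraph.fromEdgeSet (↑S : Set (Sym2 (Fin n)))).Reachable u v := h huv
    have hle : SimpleGraph.fromEdgeSet (↑S : Set (Sym2 (Fin n))) ≤ T.deleteEdges {e} := by
      intro a b hab
      rw [fromEdgeSet_adj] at hab
      rw [deleteEdges_adj]
      refine ⟨(mem_edgeSet T).mp (hS hab.1), ?_⟩
      simp only [Set.mem_singleton_iff]
      intro hcontra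
      exact heS (hcontra ▸ hab.1)
    exact hnr (hr.mono hle)
  · intro h u v huv
    have hr : T.Reachable u v := hT.isConnected.preconnected u v
    obtain ⟨p, hp⟩ : ∃ p : T.Walk u v, p.IsPath := by
      obtain ⟨q⟩ := hr
      exact ⟨q.toPath, q.toPath.2⟩
    have hedges : ∀ e ∈ p.edges, e ∈ (SimpleGraph.fromEdgeSet (↑S : Set (Sym2 (Fin n)))).edgeSet := by
      intro e heP
      have heT : e ∈ T.edgeSet := p.edges_subset_edgeSet heP
      have : e ∈ pathEdges T σ :=
        ⟨heT, u, v, huv, path_edge_disconnects hT.IsAcyclic p hp heP⟩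
      rw [edgeSet_fromEdgeSet]
      exact ⟨h this, T.not_isDiag_of_mem_edgeSet heT⟩
    exact ⟨p.transfer _ hedges⟩

/-- Kernel setoid of a coloring. -/
def kappaS (w : Fin n → ℕ) : Setoid (Fin n) :=
  ⟨fun i j => w i = w j, ⟨fun _ => rfl, Eq.symm, Eq.trans⟩⟩

lemma csetoid_le_kappa {T : SimpleGraph (Fin n)} (w : Fin n → ℕ)
    (S : Finset (Sym2 (Fin n))) (hS : (↑S : Set (Sym2 (Fin n))) ⊆ T.edgeSet) :
    csetoid S ≤ kappaS w ↔ ∀ a b : Fin n, s(a, b) ∈ S → w a = w b := by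
  constructor
  · intro h a b hab
    have hne : a ≠ b := ((mem_edgeSet T).mp (hS hab)).ne
    exact h (⟨SimpleGraph.Walk.cons ((fromEdgeSet_adj _).mpr ⟨hab, hne⟩) SimpleGraph.Walk.nil⟩ :
      (SimpleGraph.fromEdgeSet (↑S : Set (Sym2 (Fin n)))).Reachable a b)
  · intro h u v huv
    obtain ⟨p⟩ := (huv : (SimpleGraph.fromEdgeSet (↑S : Set (Sym2 (Fin n)))).Reachable u v)
    induction p with
    | nil => rfl
    | @cons a x b hadj q ih =>
      have h1 : w a = w x := h a x ((fromEdgeSet_adj _).mp hadj).1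
      exact h1.trans ih

lemma leaf_edge_mem_of_walk {T : SimpleGraph (Fin n)} {v u y : Fin n}
    (hu : T.Adj v u) (huniq : ∀ z, T.Adj v z → z = u) (hy : v ≠ y)
    (q : T.Walk v y) : s(v, u) ∈ q.edges := by
  obtain ⟨z, hz, q', rfl⟩ := SimpleGraph.Walk.exists_eq_cons_of_ne hy q
  have : z = u := huniq z hz
  subst this
  exact List.mem_cons_self

lemma leaf_not_alone {T : SimpleGraph (Fin n)} (hT : T.IsTree) (σ : Setoid (Fin n))
    (hpe : pathEdges T σ = T.edgeSet) :
    ∀ v, IsLeaf T v → ∃ u, u ≠ v ∧ σ.r u v := by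
  rintro v ⟨u, hadj, huniq⟩
  have he : s(v, u) ∈ pathEdges T σ := by
    rw [hpe]; exact (SimpleGraph.mem_edgeSet T).mpr hadj
  obtain ⟨_, a, b, hab, hnr⟩ := he
  have hkey : ∀ x y : Fin n, x ≠ v → y ≠ v → (T.deleteEdges {s(v,u)}).Reachable x y := by
    intro x y hx hy
    obtain ⟨p, hp⟩ : ∃ p : T.Walk x y, p.IsPath := by
      obtain ⟨q⟩ := hT.isConnected.preconnected x y
      exact ⟨q.toPath, q.toPath.2⟩
    have hnot : s(v, u) ∉ p.edges := by
      intro hmem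
      have hv : v ∈ p.support := p.fst_mem_support_of_mem_edges hmem
      have hsplit := p.take_spec hv
      have h1 : s(v,u) ∈ (p.takeUntil v hv).edges := by
        have := leaf_edge_mem_of_walk hadj huniq (Ne.symm hx) (p.takeUntil v hv).reverse
        rwa [SimpleGraph.Walk.edges_reverse, List.mem_reverse] at this
      have h2 : s(v,u) ∈ (p.dropUntil v hv).edges :=
        leaf_edge_mem_of_walk hadj huniq (fun h => hy h.symm) (p.dropUntil v hv)
      have hnd := hp.edges_nodup
      rw [← hsplit, SimpleGraph.Walk.edges_append] at hnd
      exact (List.disjoint_of_nodup_append hnd) h1 h2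
    exact ⟨p.toDeleteEdges _ (fun e' he' hmem => hnot (by
      rw [Set.mem_singleton_iff] at hmem; rw [← hmem]; exact he'))⟩
  have hne : a ≠ b := fun h => hnr (h ▸ SimpleGraph.Reachable.refl a)
  by_cases hav : a = v
  · exact ⟨b, fun h => hne (hav.trans h.symm), σ.iseqv.symm (hav ▸ hab)⟩
  · by_cases hbv : b = v
    · exact ⟨a, hav, hbv ▸ hab⟩
    · exact absurd (hkey a b hav hbv) hnr

lemma sub_sum {α : Type*} [DecidableEq α] (B C : Finset α) (hCB : C ⊆ B) :
    (∑ S ∈ B.powerset, if C ⊆ S then (-1 : ℚ) ^ S.card else 0)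
      = if B = C then (-1 : ℚ) ^ C.card else 0 := by
  rw [← Finset.sum_filter]
  have hre : ∑ S ∈ B.powerset.filter (fun S => C ⊆ S), (-1 : ℚ) ^ S.card
      = ∑ D ∈ (B \ C).powerset, (-1 : ℚ) ^ (C ∪ D).card := by
    refine Finset.sum_nbij' (fun S => S \ C) (fun D => C ∪ D) ?_ ?_ ?_ ?_ ?_
    · intro S hS
      rw [Finset.mem_filter, Finset.mem_powerset] at hS
      rw [Finset.mem_powerset]
      exact Finset.sdiff_subset_sdiff hS.1 (le_refl C)
    · intro D hD
      rw [Finset.mem_powerset] at hD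
      rw [Finset.mem_filter, Finset.mem_powerset]
      exact ⟨Finset.union_subset hCB (hD.trans (Finset.sdiff_subset)), Finset.subset_union_left⟩
    · intro S hS
      rw [Finset.mem_filter] at hS
      exact Finset.union_sdiff_of_subset hS.2
    · intro D hD
      rw [Finset.mem_powerset] at hD
      exact Finset.union_sdiff_cancel_left (Finset.disjoint_sdiff.mono_right hD)
    · intro S hS
      rw [Finset.mem_filter] at hS
      rw [Finset.union_sdiff_of_subset hS.2]
  rw [hre]
  have hcard : ∀ D ∈ (B \ C).powerset, (-1 : ℚ) ^ (C ∪ D).card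
      = (-1 : ℚ) ^ C.card * (-1 : ℚ) ^ D.card := by
    intro D hD
    rw [Finset.mem_powerset] at hD
    rw [Finset.card_union_of_disjoint ((Finset.disjoint_sdiff.mono_right hD) : Disjoint C D),
      pow_add]
  rw [Finset.sum_congr rfl hcard, ← Finset.mul_sum]
  have hps : (∑ D ∈ (B \ C).powerset, (-1 : ℚ) ^ D.card)
      = if B \ C = ∅ then 1 else 0 := by
    have h := Finset.sum_powerset_neg_one_pow_card (x := B \ C)
    exact_mod_cast h
  rw [hps]
  have hiff : B \ C = ∅ ↔ B = C := by
    rw [Finset.sdiff_eq_empty_iff_subset]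
    exact ⟨fun h => le_antisymm h hCB, fun h => h ▸ le_refl B⟩
  by_cases hbc : B = C
  · rw [if_pos (hiff.mpr hbc), if_pos hbc, mul_one]
  · rw [if_neg (fun h => hbc (hiff.mp h)), if_neg hbc, mul_zero]

def gQ (n : ℕ) (T : SimpleGraph (Fin n)) (σ : Setoid (Fin n)) : ℚ :=
  ∑ S ∈ T.edgeFinset.powerset,
    if csetoid S = σ then (-1 : ℚ) ^ (n + 1) * (-1) ^ S.card else 0

def Pfin (T : SimpleGraph (Fin n)) (σ : Setoid (Fin n)) : Finset (Sym2 (Fin n)) :=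
  T.edgeFinset.filter (fun e => e ∈ pathEdges T σ)

lemma coe_Pfin (T : SimpleGraph (Fin n)) (σ : Setoid (Fin n)) :
    (↑(Pfin T σ) : Set (Sym2 (Fin n))) = pathEdges T σ := by
  ext e
  simp only [Pfin, Finset.coe_filter, Set.mem_setOf_eq, SimpleGraph.mem_edgeFinset]
  exact ⟨fun h => h.2, fun h => ⟨h.1, h⟩⟩

lemma sign_cancel (hn : 1 ≤ n) : (-1 : ℚ) ^ (n + 1) * (-1) ^ (n - 1) = 1 := by
  rw [← pow_add, show n + 1 + (n - 1) = 2 * n by omega, pow_mul, neg_one_sq, one_pow]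

lemma sum_collapse2 (f : Setoid (Fin n) → ℚ) (a : Setoid (Fin n)) :
    (∑ ρ : Setoid (Fin n), if a = ρ then f ρ else 0) = f a := by
  rw [Finset.sum_ite_eq]; simp

lemma indicator_A (hn : 1 ≤ n) {T : SimpleGraph (Fin n)} (hT : T.IsTree)
    (π : Setoid (Fin n)) :
    (∑ ρ : Setoid (Fin n), if π ≤ ρ then gQ n T ρ else 0)
      = if pathEdges T π = T.edgeSet ∧ (∀ v, IsLeaf T v → ∃ u, u ≠ v ∧ π.r u v)
        then 1 else 0 := by
  have e1 : ∀ ρ : Setoid (Fin n), (if π ≤ ρ then gQ n T ρ else 0)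
      = ∑ S ∈ T.edgeFinset.powerset,
          if π ≤ ρ ∧ csetoid S = ρ then (-1 : ℚ) ^ (n + 1) * (-1) ^ S.card else 0 := by
    intro ρ
    by_cases h : π ≤ ρ
    · rw [if_pos h]; unfold gQ
      exact Finset.sum_congr rfl (fun S _ => by simp [h])
    · rw [if_neg h]
      exact (Finset.sum_eq_zero (fun S _ => if_neg (fun hc => h hc.1))).symm
  rw [Finset.sum_congr rfl (fun ρ _ => e1 ρ), Finset.sum_comm]
  have e2 : ∀ S ∈ T.edgeFinset.powerset,
      (∑ ρ : Setoid (Fin n),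
          if π ≤ ρ ∧ csetoid S = ρ then (-1 : ℚ) ^ (n + 1) * (-1) ^ S.card else 0)
        = if Pfin T π ⊆ S then (-1 : ℚ) ^ (n + 1) * (-1) ^ S.card else 0 := by
    intro S hS
    rw [Finset.mem_powerset] at hS
    have hSsub : (↑S : Set (Sym2 (Fin n))) ⊆ T.edgeSet := by
      rw [← SimpleGraph.coe_edgeFinset]; exact_mod_cast hS
    have hcond : (π ≤ csetoid S) ↔ (Pfin T π ⊆ S) := by
      rw [le_csetoid_iff hT π S hSsub, ← coe_Pfin T π, Finset.coe_subset]
    calc (∑ ρ : Setoid (Fin n),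
          if π ≤ ρ ∧ csetoid S = ρ then (-1 : ℚ) ^ (n + 1) * (-1) ^ S.card else 0)
        = ∑ ρ : Setoid (Fin n), if csetoid S = ρ then
            (if π ≤ ρ then (-1 : ℚ) ^ (n + 1) * (-1) ^ S.card else 0) else 0 :=
          Finset.sum_congr rfl (fun ρ _ => by
            by_cases h1 : csetoid S = ρ <;> by_cases h2 : π ≤ ρ <;> simp [h1, h2])
      _ = if π ≤ csetoid S then (-1 : ℚ) ^ (n + 1) * (-1) ^ S.card else 0 :=
          sum_collapse2 _ _
      _ = if Pfin T π ⊆ S then (-1 : ℚ) ^ (n + 1) * (-1) ^ S.card else 0 := by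
          rw [if_congr hcond rfl rfl]
  rw [Finset.sum_congr rfl e2]
  have hPsub : Pfin T π ⊆ T.edgeFinset := Finset.filter_subset _ _
  have e3 : (∑ S ∈ T.edgeFinset.powerset,
      if Pfin T π ⊆ S then (-1 : ℚ) ^ (n + 1) * (-1) ^ S.card else 0)
      = (-1 : ℚ) ^ (n + 1) *
        (if T.edgeFinset = Pfin T π then (-1 : ℚ) ^ (Pfin T π).card else 0) := by
    rw [← sub_sum T.edgeFinset (Pfin T π) hPsub, Finset.mul_sum]
    exact Finset.sum_congr rfl (fun S _ => by
      by_cases h : Pfin T π ⊆ S <;> simp [h])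
  rw [e3]
  have hcondA : (T.edgeFinset = Pfin T π)
      ↔ (pathEdges T π = T.edgeSet ∧ (∀ v, IsLeaf T v → ∃ u, u ≠ v ∧ π.r u v)) := by
    constructor
    · intro h
      have hco : pathEdges T π = T.edgeSet := by
        rw [← coe_Pfin T π, ← h, SimpleGraph.coe_edgeFinset]
      exact ⟨hco, leaf_not_alone hT π hco⟩
    · intro ⟨h, _⟩
      apply Finset.coe_injective
      rw [coe_Pfin T π, h, SimpleGraph.coe_edgeFinset]
  by_cases hA : pathEdges T π = T.edgeSet ∧ (∀ v, IsLeaf T v → ∃ u, u ≠ v ∧ π.r u v)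
  · rw [if_pos (hcondA.mpr hA), if_pos hA]
    have hcard : (Pfin T π).card = n - 1 := by
      rw [← hcondA.mpr hA]
      have := hT.card_edgeFinset
      rw [Fintype.card_fin] at this
      omega
    rw [hcard]
    exact sign_cancel hn
  · rw [if_neg (fun h => hA (hcondA.mp h)), if_neg hA, mul_zero]

lemma KI (hn : 1 ≤ n) {T : SimpleGraph (Fin n)} (hT : T.IsTree)
    {mu : Setoid (Fin n) → Setoid (Fin n) → ℚ} (hmu : MoebiusPi n mu)
    (σ : Setoid (Fin n)) :
    (∑ π : Setoid (Fin n),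
      if (pathEdges T π = T.edgeSet ∧ (∀ v, IsLeaf T v → ∃ u, u ≠ v ∧ π.r u v)) ∧ σ ≤ π
      then mu σ π else 0) = gQ n T σ := by
  have e1 : ∀ π : Setoid (Fin n),
      (if (pathEdges T π = T.edgeSet ∧ (∀ v, IsLeaf T v → ∃ u, u ≠ v ∧ π.r u v)) ∧ σ ≤ π
        then mu σ π else 0)
      = ∑ ρ : Setoid (Fin n), if σ ≤ π ∧ π ≤ ρ then mu σ π * gQ n T ρ else 0 := by
    intro π
    by_cases h : σ ≤ π
    · have : (if (pathEdges T π = T.edgeSet ∧ (∀ v, IsLeaf T v → ∃ u, u ≠ v ∧ π.r u v)) ∧ σ ≤ π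
          then mu σ π else 0)
          = mu σ π * (if pathEdges T π = T.edgeSet ∧ (∀ v, IsLeaf T v → ∃ u, u ≠ v ∧ π.r u v)
            then 1 else 0) := by
        by_cases hA : pathEdges T π = T.edgeSet ∧ (∀ v, IsLeaf T v → ∃ u, u ≠ v ∧ π.r u v) <;>
          simp [hA, h]
      rw [this, ← indicator_A hn hT π, Finset.mul_sum]
      exact Finset.sum_congr rfl (fun ρ _ => by
        by_cases h2 : π ≤ ρ <;> simp [h, h2])
    · rw [if_neg (fun hc => h hc.2)]
      exact (Finset.sum_eq_zero (fun ρ _ => if_neg (fun hc => h hc.1))).symm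
  rw [Finset.sum_congr rfl (fun π _ => e1 π), Finset.sum_comm]
  have e2 : ∀ ρ : Setoid (Fin n),
      (∑ π : Setoid (Fin n), if σ ≤ π ∧ π ≤ ρ then mu σ π * gQ n T ρ else 0)
      = (if σ = ρ then 1 else 0) * gQ n T ρ := by
    intro ρ
    have : (∑ π : Setoid (Fin n), if σ ≤ π ∧ π ≤ ρ then mu σ π * gQ n T ρ else 0)
        = (∑ π : Setoid (Fin n), if σ ≤ π ∧ π ≤ ρ then mu σ π else 0) * gQ n T ρ := by
      rw [Finset.sum_mul]
      exact Finset.sum_congr rfl (fun π _ => by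
        by_cases h : σ ≤ π ∧ π ≤ ρ <;> simp [h])
    rw [this]
    congr 1
    by_cases hle : σ ≤ ρ
    · exact hmu σ ρ hle
    · rw [if_neg (fun (h : σ = ρ) => hle (h ▸ le_refl σ))]
      exact Finset.sum_eq_zero (fun π _ => if_neg (fun hc => hle (hc.1.trans hc.2)))
  rw [Finset.sum_congr rfl (fun ρ _ => e2 ρ)]
  have e3 : ∀ ρ : Setoid (Fin n),
      (if σ = ρ then (1:ℚ) else 0) * gQ n T ρ = if σ = ρ then gQ n T ρ else 0 := by
    intro ρ; by_cases h : σ = ρ <;> simp [h]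
  rw [Finset.sum_congr rfl (fun ρ _ => e3 ρ)]
  exact sum_collapse2 _ _

end Aux

/-- for a tree T on [n],
Y_T = (-1)^(n-1) * sum of x_sigma over set partitions sigma with
S_sigma = E(T) in which no leaf is alone.  `mu` is the Moebius function of the
partition lattice and `xf mu` the corresponding Schur functions in NCSym. -/
theorem tree_x_expansion (n : ℕ) (hn : 1 ≤ n) (T : SimpleGraph (Fin n)) (hT : T.IsTree)
    (mu : Setoid (Fin n) → Setoid (Fin n) → ℚ) (hmu : MoebiusPi n mu) :
    YG T = ((-1 : ℚ) ^ (n - 1)) •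
      ∑ σ : Setoid (Fin n),
        if pathEdges T σ = T.edgeSet ∧ (∀ v, IsLeaf T v → ∃ u, u ≠ v ∧ σ.r u v)
        then xf mu σ else 0 := by
  funext w
  have hpfun : ∀ τ : Setoid (Fin n), pfun τ w = if τ ≤ kappaS w then 1 else 0 := by
    intro τ
    unfold pfun
    refine if_congr ?_ rfl rfl
    exact ⟨fun h x y hxy => h x y hxy, fun h i j hij => h hij⟩
  have hxf : ∀ π : Setoid (Fin n), xf mu π w
      = ∑ τ : Setoid (Fin n), if τ ≤ π ∧ τ ≤ kappaS w then mu τ π else 0 := by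
    intro π
    unfold xf
    rw [Finset.sum_apply]
    refine Finset.sum_congr rfl (fun τ _ => ?_)
    by_cases h : τ ≤ π
    · rw [if_pos h, Pi.smul_apply, hpfun τ, smul_eq_mul]
      by_cases h2 : τ ≤ kappaS w <;> simp [h, h2]
    · simp [h]
  have hRHS : (((-1 : ℚ) ^ (n - 1)) • ∑ σ : Setoid (Fin n),
      if pathEdges T σ = T.edgeSet ∧ (∀ v, IsLeaf T v → ∃ u, u ≠ v ∧ σ.r u v)
      then xf mu σ else 0) w
      = (-1 : ℚ) ^ (n - 1) * ∑ σ : Setoid (Fin n),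
          (if pathEdges T σ = T.edgeSet ∧ (∀ v, IsLeaf T v → ∃ u, u ≠ v ∧ σ.r u v)
            then xf mu σ w else 0) := by
    rw [Pi.smul_apply, Finset.sum_apply, smul_eq_mul]
    congr 1
    exact Finset.sum_congr rfl (fun σ _ => apply_ite (fun f : NCF n => f w) _ _ _)
  rw [hRHS]
  have stepa : ∀ π : Setoid (Fin n),
      (if pathEdges T π = T.edgeSet ∧ (∀ v, IsLeaf T v → ∃ u, u ≠ v ∧ π.r u v)
        then xf mu π w else 0)
      = ∑ τ : Setoid (Fin n),
          if ((pathEdges T π = T.edgeSet ∧ (∀ v, IsLeaf T v → ∃ u, u ≠ v ∧ π.r u v)) ∧ τ ≤ π)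
            ∧ τ ≤ kappaS w then mu τ π else 0 := by
    intro π
    by_cases hA : pathEdges T π = T.edgeSet ∧ (∀ v, IsLeaf T v → ∃ u, u ≠ v ∧ π.r u v)
    · rw [if_pos hA, hxf π]
      exact Finset.sum_congr rfl (fun τ _ => if_congr (by tauto) rfl rfl)
    · rw [if_neg hA]
      exact (Finset.sum_eq_zero (fun τ _ => if_neg (fun hc => hA hc.1.1))).symm
  rw [Finset.sum_congr rfl (fun π _ => stepa π), Finset.sum_comm]
  have stepc : ∀ τ : Setoid (Fin n),
      (∑ π : Setoid (Fin n),
        if ((pathEdges T π = T.edgeSet ∧ (∀ v, IsLeaf T v → ∃ u, u ≠ v ∧ π.r u v)) ∧ τ ≤ π)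
          ∧ τ ≤ kappaS w then mu τ π else 0)
      = if τ ≤ kappaS w then gQ n T τ else 0 := by
    intro τ
    by_cases hκ : τ ≤ kappaS w
    · rw [if_pos hκ, ← KI hn hT hmu τ]
      exact Finset.sum_congr rfl (fun π _ => if_congr (by tauto) rfl rfl)
    · rw [if_neg hκ]
      exact Finset.sum_eq_zero (fun π _ => if_neg (fun hc => hκ hc.2))
  rw [Finset.sum_congr rfl (fun τ _ => stepc τ)]
  -- unfold gQ and swap again
  have stepd : (∑ τ : Setoid (Fin n), if τ ≤ kappaS w then gQ n T τ else 0)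
      = ∑ S ∈ T.edgeFinset.powerset,
          if csetoid S ≤ kappaS w then (-1 : ℚ) ^ (n + 1) * (-1) ^ S.card else 0 := by
    have e1 : ∀ τ : Setoid (Fin n), (if τ ≤ kappaS w then gQ n T τ else 0)
        = ∑ S ∈ T.edgeFinset.powerset,
            if τ ≤ kappaS w ∧ csetoid S = τ then (-1 : ℚ) ^ (n + 1) * (-1) ^ S.card else 0 := by
      intro τ
      by_cases h : τ ≤ kappaS w
      · rw [if_pos h]; unfold gQ
        exact Finset.sum_congr rfl (fun S _ => by simp [h])
      · rw [if_neg h]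
        exact (Finset.sum_eq_zero (fun S _ => if_neg (fun hc => h hc.1))).symm
    rw [Finset.sum_congr rfl (fun τ _ => e1 τ), Finset.sum_comm]
    refine Finset.sum_congr rfl (fun S _ => ?_)
    calc (∑ τ : Setoid (Fin n),
          if τ ≤ kappaS w ∧ csetoid S = τ then (-1 : ℚ) ^ (n + 1) * (-1) ^ S.card else 0)
        = ∑ τ : Setoid (Fin n), if csetoid S = τ then
            (if τ ≤ kappaS w then (-1 : ℚ) ^ (n + 1) * (-1) ^ S.card else 0) else 0 :=
          Finset.sum_congr rfl (fun τ _ => by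
            by_cases h1 : csetoid S = τ <;> by_cases h2 : τ ≤ kappaS w <;> simp [h1, h2])
      _ = if csetoid S ≤ kappaS w then (-1 : ℚ) ^ (n + 1) * (-1) ^ S.card else 0 :=
          sum_collapse2 _ _
  rw [stepd]
  -- monochromatic edges
  set M := T.edgeFinset.filter (fun e => ∀ a b : Fin n, e = s(a, b) → w a = w b) with hM
  have hMsub : M ⊆ T.edgeFinset := Finset.filter_subset _ _
  have stepe : ∀ S ∈ T.edgeFinset.powerset,
      (if csetoid S ≤ kappaS w then (-1 : ℚ) ^ (n + 1) * (-1) ^ S.card else 0)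
      = if S ⊆ M then (-1 : ℚ) ^ (n + 1) * (-1) ^ S.card else 0 := by
    intro S hS
    rw [Finset.mem_powerset] at hS
    have hSsub : (↑S : Set (Sym2 (Fin n))) ⊆ T.edgeSet := by
      rw [← SimpleGraph.coe_edgeFinset]; exact_mod_cast hS
    refine if_congr ?_ rfl rfl
    rw [csetoid_le_kappa w S hSsub]
    constructor
    · intro h e heS
      rw [Finset.mem_filter]
      exact ⟨hS heS, fun a b hab => h a b (hab ▸ heS)⟩
    · intro h a b hab
      exact (Finset.mem_filter.mp (h hab)).2 a b rfl
  rw [Finset.sum_congr rfl stepe]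
  have stepf : (∑ S ∈ T.edgeFinset.powerset,
      if S ⊆ M then (-1 : ℚ) ^ (n + 1) * (-1) ^ S.card else 0)
      = (-1 : ℚ) ^ (n + 1) * (if M = ∅ then 1 else 0) := by
    rw [← Finset.sum_filter]
    have hps : T.edgeFinset.powerset.filter (fun S => S ⊆ M) = M.powerset := by
      ext S
      simp only [Finset.mem_filter, Finset.mem_powerset]
      exact ⟨fun h => h.2, fun h => ⟨h.trans hMsub, h⟩⟩
    have hcast : (∑ S ∈ M.powerset, (-1 : ℚ) ^ S.card) = if M = ∅ then 1 else 0 := by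
      have h := Finset.sum_powerset_neg_one_pow_card (x := M)
      exact_mod_cast h
    rw [hps, ← Finset.mul_sum, hcast]
  rw [stepf]
  have hsign : (-1 : ℚ) ^ (n - 1) * ((-1 : ℚ) ^ (n + 1) * (if M = ∅ then 1 else 0))
      = if M = ∅ then 1 else 0 := by
    rw [← mul_assoc, mul_comm ((-1 : ℚ) ^ (n - 1)), sign_cancel hn, one_mul]
  rw [hsign]
  -- connect to YG
  unfold YG
  refine if_congr ?_ rfl rfl
  rw [hM, Finset.filter_eq_empty_iff]
  constructor
  · intro h e heE hmono
    revert heE hmono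
    refine Sym2.ind (fun a b heE hmono => ?_) e
    exact h a b ((SimpleGraph.mem_edgeSet T).mp (SimpleGraph.mem_edgeFinset.mp heE)) (hmono a b rfl)
  · intro h i j hadj heq
    refine h (SimpleGraph.mem_edgeFinset.mpr ((SimpleGraph.mem_edgeSet T).mpr hadj)) ?_
    intro a b hab
    rw [Sym2.eq_iff] at hab
    rcases hab with ⟨rfl, rfl⟩ | ⟨rfl, rfl⟩
    · exact heq
    · exact heq.symm

end
end

section
/- For a connected graph G with n vertices, (-1)^{n-1} Y_G is x-positive; more generally, for a graph G with n vertices and k connected components, (-1)^{n-k} Y_G is a nonnegative linear combination of the Schur functions x_π in noncommuting variables. -/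
open scoped Classical
noncomputable section

namespace YGaux
variable {n : ℕ}

/-- setoid merging the classes of `u` and `v` only. -/
def pairS (u v : Fin n) : Setoid (Fin n) :=
  ⟨fun a b => a = b ∨ ((a = u ∨ a = v) ∧ (b = u ∨ b = v)),
   ⟨fun _ => Or.inl rfl,
    by
      intro a b h
      rcases h with h | ⟨h1, h2⟩
      · exact Or.inl h.symm
      · exact Or.inr ⟨h2, h1⟩,
    by
      intro a b c h1 h2
      rcases h1 with rfl | ⟨h1, h2'⟩
      · exact h2
      · rcases h2 with rfl | ⟨h3, h4⟩
        · exact Or.inr ⟨h1, h2'⟩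
        · exact Or.inr ⟨h1, h4⟩⟩⟩

lemma pairS_le {u v : Fin n} {σ : Setoid (Fin n)} : pairS u v ≤ σ ↔ σ u v := by
  constructor
  · intro h; exact h (Or.inr ⟨Or.inl rfl, Or.inr rfl⟩)
  · intro h a b hab
    rcases hab with rfl | ⟨h1 | h1, h2 | h2⟩
    · exact σ.refl a
    · subst h1; subst h2; exact σ.refl _
    · subst h1; subst h2; exact h
    · subst h1; subst h2; exact σ.symm h
    · subst h1; subst h2; exact σ.refl _

/-- the relation of `τ ⊔ pairS u v`. -/
def mergeS (τ : Setoid (Fin n)) (u v : Fin n) : Setoid (Fin n) :=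
  ⟨fun a b => τ a b ∨ ((τ a u ∨ τ a v) ∧ (τ u b ∨ τ v b)),
   ⟨fun a => Or.inl (τ.refl a),
    by
      intro a b h
      rcases h with h | ⟨h1, h2⟩
      · exact Or.inl (τ.symm h)
      · refine Or.inr ⟨?_, ?_⟩
        · rcases h2 with h2 | h2
          · exact Or.inl (τ.symm h2)
          · exact Or.inr (τ.symm h2)
        · rcases h1 with h1 | h1
          · exact Or.inl (τ.symm h1)
          · exact Or.inr (τ.symm h1),
    by
      intro a b c h1 h2
      rcases h1 with h1 | ⟨ha, hb⟩
      · rcases h2 with h2 | ⟨hb', hc⟩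
        · exact Or.inl (τ.trans h1 h2)
        · refine Or.inr ⟨?_, hc⟩
          rcases hb' with h | h
          · exact Or.inl (τ.trans h1 h)
          · exact Or.inr (τ.trans h1 h)
      · rcases h2 with h2 | ⟨hb', hc⟩
        · refine Or.inr ⟨ha, ?_⟩
          rcases hb with h | h
          · exact Or.inl (τ.trans h h2)
          · exact Or.inr (τ.trans h h2)
        · exact Or.inr ⟨ha, hc⟩⟩⟩

lemma sup_pairS (τ : Setoid (Fin n)) (u v : Fin n) : τ ⊔ pairS u v = mergeS τ u v := by
  apply le_antisymm
  · refine sup_le ?_ ?_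
    · intro a b h; exact Or.inl h
    · intro a b h
      rcases h with rfl | ⟨h1, h2⟩
      · exact Or.inl (τ.refl a)
      · refine Or.inr ⟨?_, ?_⟩
        · rcases h1 with rfl | rfl
          · exact Or.inl (τ.refl a)
          · exact Or.inr (τ.refl a)
        · rcases h2 with rfl | rfl
          · exact Or.inl (τ.refl b)
          · exact Or.inr (τ.refl b)
  · intro a b h
    have hτ : τ ≤ τ ⊔ pairS u v := le_sup_left
    have hp : pairS u v ≤ τ ⊔ pairS u v := le_sup_right
    have huv : (τ ⊔ pairS u v) u v := hp (Or.inr ⟨Or.inl rfl, Or.inr rfl⟩)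
    rcases h with h | ⟨h1, h2⟩
    · exact hτ h
    · have sa : (τ ⊔ pairS u v) a u := by
        rcases h1 with h | h
        · exact hτ h
        · exact (τ ⊔ pairS u v).trans (hτ h) ((τ ⊔ pairS u v).symm huv)
      have sb : (τ ⊔ pairS u v) u b := by
        rcases h2 with h | h
        · exact hτ h
        · exact (τ ⊔ pairS u v).trans huv (hτ h)
      exact (τ ⊔ pairS u v).trans sa sb

lemma sup_pairS_rel {τ : Setoid (Fin n)} {u v a b : Fin n} :
    (τ ⊔ pairS u v) a b ↔ (τ a b ∨ ((τ a u ∨ τ a v) ∧ (τ u b ∨ τ v b))) := by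
  rw [sup_pairS]; exact Iff.rfl

/-- number of blocks of a set partition -/
def kS (σ : Setoid (Fin n)) : ℕ := Fintype.card (Quotient σ)

lemma kS_le (σ : Setoid (Fin n)) : kS σ ≤ n := by
  have : Fintype.card (Quotient σ) ≤ Fintype.card (Fin n) :=
    Fintype.card_le_of_surjective (Quotient.mk σ) (Quotient.exists_rep)
  simpa [kS] using this

lemma kS_bot : kS (⊥ : Setoid (Fin n)) = n := by
  have e : Quotient (⊥ : Setoid (Fin n)) ≃ Fin n := by
    refine Equiv.ofBijective (Quotient.lift id ?_) ⟨?_, ?_⟩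
    · intro a b h
      have := Setoid.bot_def (α := Fin n)
      exact congrFun (congrFun this a) b ▸ h
    · intro x y h
      induction x using Quotient.ind
      induction y using Quotient.ind
      simp only [Quotient.lift_mk, id] at h
      exact Quotient.sound (by exact h ▸ (⊥ : Setoid (Fin n)).refl _)
    · intro a; exact ⟨Quotient.mk _ a, rfl⟩
  simpa [kS] using Fintype.card_congr e

lemma kS_merge {τ : Setoid (Fin n)} {u v : Fin n} (h : ¬ τ u v) :
    kS (mergeS τ u v) + 1 = kS τ := by
  classical
  set m := mergeS τ u v
  have resp : ∀ a b : Fin n, τ a b → (Quotient.mk m a) = Quotient.mk m b := by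
    intro a b hab; exact Quotient.sound (Or.inl hab)
  let g : Quotient τ → Quotient m := Quotient.lift (fun a => Quotient.mk m a) (by
    intro a b hab; exact resp a b hab)
  let f : {x : Quotient τ // x ≠ Quotient.mk τ v} → Quotient m := fun x => g x.1
  have hbij : Function.Bijective f := by
    constructor
    · rintro ⟨x, hx⟩ ⟨y, hy⟩ hxy
      induction x using Quotient.ind with | _ a =>
      induction y using Quotient.ind with | _ b =>
      have hm : m a b := Quotient.exact hxy
      have hav : ¬ τ a v := fun hc => hx (Quotient.sound hc)
      have hbv : ¬ τ b v := fun hc => hy (Quotient.sound hc)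
      have : τ a b := by
        rcases hm with hm | ⟨h1, h2⟩
        · exact hm
        · rcases h1 with h1 | h1
          · rcases h2 with h2 | h2
            · exact τ.trans h1 h2
            · exact absurd (τ.symm h2) hbv
          · exact absurd h1 hav
      exact Subtype.ext (Quotient.sound this)
    · intro y
      induction y using Quotient.ind with | _ a =>
      by_cases hav : τ a v
      · refine ⟨⟨Quotient.mk τ u, ?_⟩, ?_⟩
        · intro hc
          exact h (Quotient.exact hc)
        · show Quotient.mk m u = Quotient.mk m a
          exact Quotient.sound (Or.inr ⟨Or.inl (τ.refl u), Or.inr (τ.symm hav)⟩)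
      · exact ⟨⟨Quotient.mk τ a, fun hc => hav (Quotient.exact hc)⟩, rfl⟩
  have hcard : Fintype.card (Quotient m) = Fintype.card {x : Quotient τ // x ≠ Quotient.mk τ v} :=
    (Fintype.card_congr (Equiv.ofBijective f hbij)).symm
  have hsub : Fintype.card {x : Quotient τ // x ≠ Quotient.mk τ v}
      = Fintype.card (Quotient τ) - 1 := by
    have := Fintype.card_subtype_compl (fun x : Quotient τ => x = Quotient.mk τ v)
    simpa [Fintype.card_subtype_eq] using this
  have hpos : 1 ≤ Fintype.card (Quotient τ) := by
    have : Nonempty (Quotient τ) := ⟨Quotient.mk _ v⟩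
    exact Fintype.card_pos
  simp only [kS, hcard, hsub]
  omega

lemma kS_sup_pair {τ : Setoid (Fin n)} {u v : Fin n} (h : ¬ τ u v) :
    kS (τ ⊔ pairS u v) + 1 = kS τ := by
  rw [sup_pairS]; exact kS_merge h

/-- join of the pair setoids of a finite set of pairs -/
def comp (S : Finset (Fin n × Fin n)) : Setoid (Fin n) :=
  S.sup (fun p => pairS p.1 p.2)

lemma comp_mono {S T : Finset (Fin n × Fin n)} (h : S ⊆ T) : comp S ≤ comp T :=
  Finset.sup_mono h

lemma comp_le_iff {S : Finset (Fin n × Fin n)} {σ : Setoid (Fin n)} :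
    comp S ≤ σ ↔ ∀ p ∈ S, σ p.1 p.2 := by
  rw [comp, Finset.sup_le_iff]
  exact forall_congr' fun p => forall_congr' fun _ => pairS_le

lemma comp_rel_pair {S : Finset (Fin n × Fin n)} {p : Fin n × Fin n} (hp : p ∈ S) :
    (comp S) p.1 p.2 := by
  have hle : pairS p.1 p.2 ≤ comp S := Finset.le_sup (f := fun q => pairS q.1 q.2) hp
  exact hle (Or.inr ⟨Or.inl rfl, Or.inr rfl⟩)

/-- bridge lemma -/
lemma bridge {τ σ : Setoid (Fin n)} {u v : Fin n} (hτσ : τ ≤ σ) (huv : ¬ σ u v)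
    {π : Setoid (Fin n)} (hπ : π ≤ σ) (h : π ≤ τ ⊔ pairS u v) : π ≤ τ := by
  intro a b hab
  have hσ : σ a b := hπ hab
  have h2 := h hab
  rcases sup_pairS_rel.mp h2 with h2 | ⟨h1 | h1, h2 | h2⟩
  · exact h2
  · exact τ.trans h1 h2
  · exact absurd (σ.trans (σ.symm (hτσ h1)) (σ.trans hσ (σ.symm (hτσ h2)))) huv
  · exact absurd (σ.trans (σ.trans (hτσ h2) (σ.symm hσ)) (hτσ h1)) huv
  · exact τ.trans h1 h2

/-- the main sign lemma, proved by deletion-contraction. -/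
lemma main (E₀ : Finset (Fin n × Fin n)) (T π : Setoid (Fin n)) :
    0 ≤ (-1 : ℚ) ^ (kS T + kS (comp E₀ ⊔ T)) *
      ∑ S ∈ E₀.powerset, (-1 : ℚ) ^ S.card * (if π ≤ comp S ⊔ T then 1 else 0) := by
  classical
  induction E₀ using Finset.induction_on generalizing T with
  | empty =>
      have hc : comp (∅ : Finset (Fin n × Fin n)) = ⊥ := Finset.sup_empty
      rw [hc, bot_sup_eq, Finset.powerset_empty, Finset.sum_singleton]
      have : ((-1 : ℚ)) ^ (kS T + kS T) = 1 := Even.neg_one_pow ⟨kS T, rfl⟩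
      rw [this, one_mul]
      simp only [Finset.card_empty, pow_zero, one_mul, hc, bot_sup_eq]
      split <;> norm_num
  | @insert e s he ih =>
      set u := e.1
      set v := e.2
      set pe := pairS u v with hpe
      have hcomp_ins : ∀ t : Finset (Fin n × Fin n), comp (insert e t) = pe ⊔ comp t := by
        intro t; exact Finset.sup_insert
      have hsum := Finset.sum_powerset_insert he
        (fun S => (-1 : ℚ) ^ S.card * (if π ≤ comp S ⊔ T then 1 else 0))
      set A := ∑ S ∈ s.powerset, (-1 : ℚ) ^ S.card * (if π ≤ comp S ⊔ T then 1 else 0) with hA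
      set B := ∑ S ∈ s.powerset, (-1 : ℚ) ^ S.card * (if π ≤ comp S ⊔ (T ⊔ pe) then 1 else 0) with hB
      have hins : ∀ t ∈ s.powerset,
          (-1 : ℚ) ^ (insert e t).card * (if π ≤ comp (insert e t) ⊔ T then 1 else 0)
          = -((-1 : ℚ) ^ t.card * (if π ≤ comp t ⊔ (T ⊔ pe) then 1 else 0)) := by
        intro t ht
        have het : e ∉ t := fun hc => he (Finset.mem_powerset.mp ht hc)
        have hcard : (insert e t).card = t.card + 1 := Finset.card_insert_of_notMem het
        have hco : comp (insert e t) ⊔ T = comp t ⊔ (T ⊔ pe) := by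
          rw [hcomp_ins, sup_comm pe (comp t), sup_assoc, sup_comm pe T]
        rw [hcard, hco, pow_succ]
        ring
      have hstep : ∑ S ∈ (insert e s).powerset,
          (-1 : ℚ) ^ S.card * (if π ≤ comp S ⊔ T then 1 else 0) = A - B := by
        rw [hsum, Finset.sum_congr rfl hins, Finset.sum_neg_distrib]
        ring
      rw [hstep]
      have hcoES : comp (insert e s) ⊔ T = (comp s ⊔ T) ⊔ pe := by
        rw [hcomp_ins, sup_comm pe (comp s), sup_assoc, sup_comm pe T, ← sup_assoc]
      rw [hcoES]
      by_cases hTr : T u v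
      · have hpeT : pe ≤ T := pairS_le.mpr hTr
        have h1 : T ⊔ pe = T := sup_eq_left.mpr hpeT
        have h2 : (comp s ⊔ T) ⊔ pe = comp s ⊔ T :=
          sup_eq_left.mpr (le_trans hpeT le_sup_right)
        have : B = A := by rw [hB, hA, h1]
        rw [this, sub_self, mul_zero]
      · have hk : kS (T ⊔ pe) + 1 = kS T := kS_sup_pair hTr
        set K := kS ((comp s ⊔ T) ⊔ pe) with hK
        have hB2 : 0 ≤ (-1 : ℚ) ^ (kS (T ⊔ pe) + K) * B := by
          have := ih (T ⊔ pe)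
          have hco : comp s ⊔ (T ⊔ pe) = (comp s ⊔ T) ⊔ pe := (sup_assoc _ _ _).symm
          rwa [hco] at this
        have hnegB : 0 ≤ (-1 : ℚ) ^ (kS T + K) * (-B) := by
          have hexp : kS T + K = (kS (T ⊔ pe) + K) + 1 := by omega
          rw [hexp, pow_succ]
          nlinarith [hB2]
        by_cases hfull : (comp s ⊔ T) u v
        · have h2 : (comp s ⊔ T) ⊔ pe = comp s ⊔ T :=
            sup_eq_left.mpr (pairS_le.mpr hfull)
          have hA1 : 0 ≤ (-1 : ℚ) ^ (kS T + K) * A := by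
            have := ih T
            rwa [hK, h2] at *
          calc (0:ℚ) ≤ (-1 : ℚ) ^ (kS T + K) * A + (-1 : ℚ) ^ (kS T + K) * (-B) :=
                add_nonneg hA1 hnegB
            _ = (-1 : ℚ) ^ (kS T + K) * (A - B) := by ring
        · by_cases hπle : π ≤ comp s ⊔ T
          · have : A = B := by
              apply Finset.sum_congr rfl
              intro t ht
              congr 1
              have hsub : comp t ≤ comp s := comp_mono (Finset.mem_powerset.mp ht)
              have hiff : (π ≤ comp t ⊔ T) ↔ (π ≤ comp t ⊔ (T ⊔ pe)) := by
                constructor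
                · intro h
                  exact le_trans h (sup_le_sup_left le_sup_left _)
                · intro h
                  have h' : π ≤ (comp t ⊔ T) ⊔ pe := by rwa [sup_assoc]
                  exact bridge (sup_le_sup_right hsub T) hfull hπle h'
              simp only [hiff]
            rw [this, sub_self, mul_zero]
          · have hA0 : A = 0 := by
              apply Finset.sum_eq_zero
              intro t ht
              have hsub : comp t ≤ comp s := comp_mono (Finset.mem_powerset.mp ht)
              have : ¬ π ≤ comp t ⊔ T := fun hc =>
                hπle (le_trans hc (sup_le_sup_right hsub T))
              rw [if_neg this, mul_zero]
            rw [hA0, zero_sub, mul_neg]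
            rw [mul_neg] at hnegB
            exact hnegB

/-- the edge finset of G (each edge once, ordered). -/
def EG (G : SimpleGraph (Fin n)) : Finset (Fin n × Fin n) :=
  Finset.univ.filter (fun p => G.Adj p.1 p.2 ∧ p.1 < p.2)

lemma mem_EG {G : SimpleGraph (Fin n)} {p : Fin n × Fin n} :
    p ∈ EG G ↔ G.Adj p.1 p.2 ∧ p.1 < p.2 := by
  simp [EG]

/-- `pfun` of a `comp` evaluates to a conjunction condition. -/
lemma pfun_comp (S : Finset (Fin n × Fin n)) (w : Fin n → ℕ) :
    pfun (comp S) w = if ∀ p ∈ S, w p.1 = w p.2 then (1:ℚ) else 0 := by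
  have hiff : (∀ i j : Fin n, (comp S).r i j → w i = w j) ↔ (∀ p ∈ S, w p.1 = w p.2) := by
    constructor
    · intro h p hp
      exact h p.1 p.2 (comp_rel_pair hp)
    · intro h i j hij
      have hle : comp S ≤ Setoid.ker w := by
        rw [comp_le_iff]
        intro p hp
        exact Setoid.ker_def.mpr (h p hp)
      exact Setoid.ker_def.mp (hle hij)
  rw [pfun]
  simp only [hiff]

/-- inclusion-exclusion -/
lemma YG_eq_sum (G : SimpleGraph (Fin n)) (w : Fin n → ℕ) :
    YG G w = ∑ S ∈ (EG G).powerset, (-1 : ℚ) ^ S.card * pfun (comp S) w := by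
  classical
  have step1 : YG G w = ∏ p ∈ EG G, ((-(if w p.1 = w p.2 then (1:ℚ) else 0)) + 1) := by
    by_cases hproper : ∀ i j : Fin n, G.Adj i j → w i ≠ w j
    · rw [YG, if_pos hproper]
      rw [Finset.prod_eq_one]
      intro p hp
      rw [mem_EG] at hp
      rw [if_neg (hproper p.1 p.2 hp.1)]
      norm_num
    · rw [YG, if_neg hproper]
      push_neg at hproper
      obtain ⟨i, j, hadj, heq⟩ := hproper
      have hne : i ≠ j := hadj.ne
      rcases hne.lt_or_gt with hlt | hlt
      · refine (Finset.prod_eq_zero (i := (i, j)) ?_ ?_).symm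
        · rw [mem_EG]; exact ⟨hadj, hlt⟩
        · simp [heq]
      · refine (Finset.prod_eq_zero (i := (j, i)) ?_ ?_).symm
        · rw [mem_EG]; exact ⟨hadj.symm, hlt⟩
        · simp [heq.symm]
  rw [step1, Finset.prod_add]
  apply Finset.sum_congr rfl
  intro S hS
  rw [Finset.prod_const_one, mul_one]
  have : ∀ p ∈ S, (-(if w p.1 = w p.2 then (1:ℚ) else 0))
      = (-1 : ℚ) * (if w p.1 = w p.2 then (1:ℚ) else 0) := by intro p _; ring
  rw [Finset.prod_congr rfl this, Finset.prod_mul_distrib, Finset.prod_const]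
  congr 1
  rw [pfun_comp]
  by_cases hall : ∀ p ∈ S, w p.1 = w p.2
  · rw [if_pos hall, Finset.prod_eq_one]
    intro p hp
    rw [if_pos (hall p hp)]
  · rw [if_neg hall]
    push_neg at hall
    obtain ⟨p, hp, hne⟩ := hall
    exact Finset.prod_eq_zero hp (by rw [if_neg hne])

/-- expansion of p in terms of x, using the Möbius property. -/
lemma pfun_eq_sum_xf (mu : Setoid (Fin n) → Setoid (Fin n) → ℚ) (hmu : MoebiusPi n mu)
    (σ : Setoid (Fin n)) (w : Fin n → ℕ) :
    pfun σ w = ∑ π : Setoid (Fin n), (if π ≤ σ then (1:ℚ) else 0) * xf mu π w := by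
  classical
  have hxf : ∀ π : Setoid (Fin n), xf mu π w
      = ∑ ρ : Setoid (Fin n), (if ρ ≤ π then mu ρ π * pfun ρ w else 0) := by
    intro π
    rw [xf]
    rw [Finset.sum_apply]
    apply Finset.sum_congr rfl
    intro ρ _
    by_cases h : ρ ≤ π
    · rw [if_pos h, if_pos h]
      rfl
    · rw [if_neg h, if_neg h]
      rfl
  calc pfun σ w
      = ∑ ρ : Setoid (Fin n), (if ρ = σ then (1:ℚ) else 0) * pfun ρ w := by
        simp only [ite_mul, one_mul, zero_mul]
        rw [Finset.sum_ite_eq' Finset.univ σ (fun ρ => pfun ρ w)]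
        simp
    _ = ∑ ρ : Setoid (Fin n),
          (∑ π : Setoid (Fin n), if ρ ≤ π ∧ π ≤ σ then mu ρ π else 0) * pfun ρ w := by
        apply Finset.sum_congr rfl
        intro ρ _
        congr 1
        by_cases h : ρ ≤ σ
        · rw [hmu ρ σ h]
        · rw [if_neg (fun hc : ρ = σ => h (hc ▸ le_refl ρ))]
          rw [Finset.sum_eq_zero]
          intro π _
          rw [if_neg (fun hc => h (le_trans hc.1 hc.2))]
    _ = ∑ ρ : Setoid (Fin n), ∑ π : Setoid (Fin n),
          (if ρ ≤ π ∧ π ≤ σ then mu ρ π else 0) * pfun ρ w := by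
        apply Finset.sum_congr rfl
        intro ρ _
        rw [Finset.sum_mul]
    _ = ∑ π : Setoid (Fin n), ∑ ρ : Setoid (Fin n),
          (if ρ ≤ π ∧ π ≤ σ then mu ρ π else 0) * pfun ρ w := Finset.sum_comm
    _ = ∑ π : Setoid (Fin n), (if π ≤ σ then (1:ℚ) else 0) * xf mu π w := by
        apply Finset.sum_congr rfl
        intro π _
        by_cases h : π ≤ σ
        · rw [if_pos h, one_mul, hxf π]
          apply Finset.sum_congr rfl
          intro ρ _
          by_cases h2 : ρ ≤ π
          · rw [if_pos ⟨h2, h⟩, if_pos h2]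
          · rw [if_neg (fun hc => h2 hc.1), if_neg h2, zero_mul]
        · rw [if_neg h, zero_mul, Finset.sum_eq_zero]
          intro ρ _
          rw [if_neg (fun hc => h hc.2), zero_mul]

/-- the reachability setoid of a graph -/
def reachS (G : SimpleGraph (Fin n)) : Setoid (Fin n) :=
  ⟨G.Reachable, ⟨fun _ => SimpleGraph.Reachable.refl _,
    SimpleGraph.Reachable.symm, SimpleGraph.Reachable.trans⟩⟩

lemma comp_EG (G : SimpleGraph (Fin n)) : comp (EG G) = reachS G := by
  apply le_antisymm
  · rw [comp_le_iff]
    intro p hp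
    exact ((mem_EG.mp hp).1).reachable
  · intro a b hab
    obtain ⟨wlk⟩ := (hab : G.Reachable a b)
    induction wlk with
    | nil => exact (comp (EG G)).refl _
    | @cons x y z hadj _ ih =>
        refine (comp (EG G)).trans ?_ ih
        have hxy : x ≠ y := hadj.ne
        rcases hxy.lt_or_gt with hlt | hlt
        · exact comp_rel_pair (p := (x, y)) (mem_EG.mpr ⟨hadj, hlt⟩)
        · exact (comp (EG G)).symm (comp_rel_pair (p := (y, x)) (mem_EG.mpr ⟨hadj.symm, hlt⟩))

lemma kS_reachS (G : SimpleGraph (Fin n)) :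
    kS (reachS G) = Nat.card G.ConnectedComponent := by
  have h1 : Nat.card G.ConnectedComponent = Nat.card (Quotient (reachS G)) := rfl
  rw [h1, Nat.card_eq_fintype_card, kS]

lemma card_cc_connected {G : SimpleGraph (Fin n)} (h : G.Connected) :
    Nat.card G.ConnectedComponent = 1 := by
  haveI : Subsingleton G.ConnectedComponent := by
    constructor
    intro a b
    induction a using SimpleGraph.ConnectedComponent.ind with | _ u =>
    induction b using SimpleGraph.ConnectedComponent.ind with | _ v =>
    exact SimpleGraph.ConnectedComponent.sound (h.preconnected u v)
  have hne : Nonempty G.ConnectedComponent := by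
    obtain ⟨v⟩ := h.nonempty
    exact ⟨G.connectedComponentMk v⟩
  rw [Nat.card_eq_one_iff_unique]
  exact ⟨inferInstance, hne⟩

end YGaux

/-- for a connected graph G on n vertices, (-1)^(n-1) Y_G is
x-positive; more generally for a graph with k connected components,
(-1)^(n-k) Y_G is a nonnegative combination of Schur functions in NCSym. -/
theorem YG_x_sign (n : ℕ) (G : SimpleGraph (Fin n))
    (mu : Setoid (Fin n) → Setoid (Fin n) → ℚ) (hmu : MoebiusPi n mu) :
    (G.Connected → ∃ c : Setoid (Fin n) → ℚ, (∀ σ, 0 ≤ c σ) ∧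
      ((-1 : ℚ) ^ (n - 1)) • YG G = ∑ σ : Setoid (Fin n), c σ • xf mu σ) ∧
    (∃ c : Setoid (Fin n) → ℚ, (∀ σ, 0 ≤ c σ) ∧
      ((-1 : ℚ) ^ (n - Nat.card G.ConnectedComponent)) • YG G
        = ∑ σ : Setoid (Fin n), c σ • xf mu σ) := by
  classical
  set k := Nat.card G.ConnectedComponent with hkdef
  set N : Setoid (Fin n) → ℚ := fun π =>
    ∑ S ∈ (YGaux.EG G).powerset, (-1 : ℚ) ^ S.card * (if π ≤ YGaux.comp S then 1 else 0)
    with hN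
  have hkk : YGaux.kS (YGaux.comp (YGaux.EG G)) = k := by
    rw [YGaux.comp_EG, YGaux.kS_reachS]
  have hkn : k ≤ n := by rw [← hkk]; exact YGaux.kS_le _
  have hsign : ∀ π, 0 ≤ (-1 : ℚ) ^ (n + k) * N π := by
    intro π
    have h := YGaux.main (YGaux.EG G) ⊥ π
    simp only [sup_bot_eq] at h
    rwa [YGaux.kS_bot, hkk] at h
  have hpow : ((-1 : ℚ)) ^ (n - k) = ((-1 : ℚ)) ^ (n + k) := by
    have h2 : n + k = (n - k) + 2 * k := by omega
    rw [h2, pow_add, pow_mul]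
    norm_num
  have hY : ∀ w, YG G w = ∑ π : Setoid (Fin n), N π * xf mu π w := by
    intro w
    rw [YGaux.YG_eq_sum G w]
    have hrw : ∀ S ∈ (YGaux.EG G).powerset, (-1:ℚ)^S.card * pfun (YGaux.comp S) w
        = ∑ π : Setoid (Fin n),
            ((-1:ℚ)^S.card * (if π ≤ YGaux.comp S then 1 else 0)) * xf mu π w := by
      intro S _
      rw [YGaux.pfun_eq_sum_xf mu hmu (YGaux.comp S) w, Finset.mul_sum]
      apply Finset.sum_congr rfl
      intro π _
      ring
    rw [Finset.sum_congr rfl hrw, Finset.sum_comm]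
    apply Finset.sum_congr rfl
    intro π _
    rw [hN, ← Finset.sum_mul]
  have hmain : ∃ c : Setoid (Fin n) → ℚ, (∀ σ, 0 ≤ c σ) ∧
      ((-1 : ℚ) ^ (n - k)) • YG G = ∑ σ : Setoid (Fin n), c σ • xf mu σ := by
    refine ⟨fun σ => (-1:ℚ)^(n-k) * N σ, ?_, ?_⟩
    · intro σ
      rw [hpow]
      exact hsign σ
    · funext w
      rw [Pi.smul_apply, smul_eq_mul, Finset.sum_apply]
      have hterm : ∀ σ ∈ (Finset.univ : Finset (Setoid (Fin n))),
          (((-1:ℚ)^(n-k) * N σ) • xf mu σ) w = (-1:ℚ)^(n-k) * (N σ * xf mu σ w) := by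
        intro σ _
        rw [Pi.smul_apply, smul_eq_mul]
        ring
      rw [Finset.sum_congr rfl hterm, ← Finset.mul_sum, ← hY w]
  refine ⟨fun hconn => ?_, hmain⟩
  have h1 : k = 1 := YGaux.card_cc_connected hconn
  rw [show n - 1 = n - k by rw [h1]]
  exact hmain

end
end

section
/- For a set partition π = B_1/···/B_ℓ ⊢ [n], the elementary symmetric function e_π in noncommuting variables is x-positive if n - ℓ is even and x-negative if n - ℓ is odd, where x denotes the Schur basis in NCSym. -/
open scoped Classical
noncomputable section

namespace ESignAux
open Equiv Equiv.Perm Finset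
variable {n : ℕ}

def orb (w : Perm (Fin n)) : Setoid (Fin n) := SameCycle.setoid w

lemma orb_r {w : Perm (Fin n)} {x y : Fin n} : (orb w) x y ↔ w.SameCycle x y := Iff.rfl

lemma setoid_pow {w : Perm (Fin n)} {s : Setoid (Fin n)} (h : ∀ x, s (x) (w x)) :
    ∀ (k : ℕ) (x), s x ((w ^ k) x) := by
  intro k
  induction k with
  | zero => intro x; exact s.refl x
  | succ k ih =>
    intro x
    have : (w ^ (k+1)) x = w ((w ^ k) x) := by rw [pow_succ' w k]; rfl
    rw [this]
    exact s.trans (ih x) (h _)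

lemma orb_le_iff {w : Perm (Fin n)} {s : Setoid (Fin n)} :
    orb w ≤ s ↔ ∀ x, s x (w x) := by
  constructor
  · intro h x
    exact Setoid.le_def.mp h (⟨1, by simp⟩ : w.SameCycle x (w x))
  · intro h
    rw [Setoid.le_def]
    intro x y hxy
    obtain ⟨k, -, hk⟩ := SameCycle.exists_pow_eq' hxy
    rw [← hk]
    exact setoid_pow h k x

lemma swap_mul_apply {a b : Fin n} {w : Perm (Fin n)} (x : Fin n) :
    (Equiv.swap a b * w) x = Equiv.swap a b (w x) := rfl

/-- CL1: powers of `swap a b * w` agree with powers of `w` along a trajectory avoiding `a, b`. -/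
lemma pow_swap_mul_eq {a b : Fin n} {w : Perm (Fin n)} {y : Fin n} :
    ∀ k : ℕ, (∀ j, 0 < j → j ≤ k → (w ^ j) y ≠ a ∧ (w ^ j) y ≠ b) →
      ((Equiv.swap a b * w) ^ k) y = (w ^ k) y := by
  intro k
  induction k with
  | zero => intro _; rfl
  | succ k ih =>
    intro h
    have hk : ((Equiv.swap a b * w) ^ k) y = (w ^ k) y :=
      ih fun j hj hjk => h j hj (hjk.trans (Nat.le_succ k))
    have e1 : ((Equiv.swap a b * w) ^ (k+1)) y
        = (Equiv.swap a b * w) (((Equiv.swap a b * w) ^ k) y) := by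
      rw [pow_succ' (Equiv.swap a b * w) k]; rfl
    have e2 : (w ^ (k+1)) y = w ((w ^ k) y) := by rw [pow_succ' w k]; rfl
    rw [e1, hk, e2, swap_mul_apply]
    have hne := h (k+1) (Nat.succ_pos k) le_rfl
    rw [e2] at hne
    exact Equiv.swap_apply_of_ne_of_ne hne.1 hne.2

/-- CL2: if `a` and `y` are in different cycles of `w`, then after merging, `y` and `a`
are in the same cycle of `swap a y * w`. -/
lemma sameCycle_merge {a y : Fin n} {w : Perm (Fin n)} (_hay : a ≠ y)
    (hnc : ¬ w.SameCycle a y) : (Equiv.swap a y * w).SameCycle y a := by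
  -- d := least k>0 with w^k y = y
  have hex : ∃ k, 0 < k ∧ (w ^ k) y = y := ⟨orderOf w, orderOf_pos w, by rw [pow_orderOf_eq_one]; rfl⟩
  classical
  set d := Nat.find hex with hd
  obtain ⟨hd0, hdy⟩ : 0 < d ∧ (w ^ d) y = y := Nat.find_spec hex
  have hmin : ∀ j, 0 < j → j < d → (w ^ j) y ≠ y := by
    intro j hj0 hjd hy
    exact Nat.find_min hex hjd ⟨hj0, hy⟩
  have havoid : ∀ j, 0 < j → j ≤ d - 1 → (w ^ j) y ≠ a ∧ (w ^ j) y ≠ y := by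
    intro j hj0 hjd
    constructor
    · intro hja
      exact hnc (SameCycle.symm ⟨(j : ℤ), by rw [zpow_natCast, hja]⟩)
    · exact hmin j hj0 (lt_of_le_of_lt hjd (Nat.sub_lt hd0 one_pos))
  have h1 : ((Equiv.swap a y * w) ^ (d-1)) y = (w ^ (d-1)) y := by
    apply pow_swap_mul_eq
    intro j hj0 hjd
    have := havoid j hj0 hjd
    exact ⟨this.1, this.2⟩
  refine ⟨(d : ℤ), ?_⟩
  have e1 : ((Equiv.swap a y * w) ^ d) y
      = (Equiv.swap a y * w) (((Equiv.swap a y * w) ^ (d-1)) y) := by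
    conv_lhs => rw [show d = (d-1) + 1 by omega, pow_succ' (Equiv.swap a y * w) (d-1)]
    rfl
  have e2 : w ((w ^ (d-1)) y) = y := by
    have : (w ^ d) y = w ((w ^ (d-1)) y) := by
      conv_lhs => rw [show d = (d-1) + 1 by omega, pow_succ' w (d-1)]
      rfl
    rw [← this, hdy]
  rw [zpow_natCast, e1, h1, swap_mul_apply, e2, Equiv.swap_apply_right]


/-- SEP: splitting separates `a` and `y`. -/
lemma split_not_sameCycle {a y : Fin n} {w : Perm (Fin n)} (hay : a ≠ y)
    (hc : w.SameCycle a y) : ¬ (Equiv.swap a y * w).SameCycle y a := by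
  have hex : ∃ k, 0 < k ∧ (w ^ k) y = a := by
    obtain ⟨i, -, hi⟩ := SameCycle.exists_pow_eq' hc.symm
    rcases Nat.eq_zero_or_pos i with h0 | h0
    · exact absurd (by simpa [h0] using hi) (Ne.symm hay)
    · exact ⟨i, h0, hi⟩
  classical
  set d := Nat.find hex with hd
  obtain ⟨hd0, hdy⟩ : 0 < d ∧ (w ^ d) y = a := Nat.find_spec hex
  have hmina : ∀ j, j < d → (w ^ j) y ≠ a := by
    intro j hjd hy
    rcases Nat.eq_zero_or_pos j with h0 | h0
    · simp [h0] at hy; exact hay hy.symm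
    · exact Nat.find_min hex hjd ⟨h0, hy⟩
  have hminy : ∀ j, 0 < j → j < d → (w ^ j) y ≠ y := by
    intro j hj0 hjd hy
    -- then a = w^(d % j) y with d % j < j < d, contradiction
    have hper : ∀ q : ℕ, (w ^ (q * j)) y = y := by
      intro q; induction q with
      | zero => simp
      | succ q ih =>
        rw [Nat.succ_mul, pow_add, Equiv.Perm.mul_apply, hy]
        exact ih
    have : (w ^ d) y = (w ^ (d % j)) y := by
      conv_lhs => rw [← Nat.div_add_mod d j, add_comm]
      rw [pow_add, Equiv.Perm.mul_apply, show j * (d / j) = (d / j) * j from Nat.mul_comm _ _,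
        hper]
    rw [hdy] at this
    exact hmina (d % j) (lt_trans (Nat.mod_lt _ hj0) hjd) this.symm
  have key : ∀ i : ℕ, ((Equiv.swap a y * w) ^ i) y = (w ^ (i % d)) y := by
    intro i
    induction i with
    | zero => simp [Nat.zero_mod]
    | succ i ih =>
      have e1 : ((Equiv.swap a y * w) ^ (i+1)) y
          = Equiv.swap a y (w (((Equiv.swap a y * w) ^ i) y)) := by
        rw [pow_succ' (Equiv.swap a y * w) i]; rfl
      rw [e1, ih]
      have e2 : w ((w ^ (i % d)) y) = (w ^ (i % d + 1)) y := by
        rw [pow_succ' w (i % d)]; rfl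
      rw [e2]
      rcases eq_or_lt_of_le (Nat.succ_le_of_lt (Nat.mod_lt i hd0)) with heq | hlt
      · -- i % d + 1 = d
        have heq' : i % d + 1 = d := heq
        rw [heq', hdy, Equiv.swap_apply_left]
        have hdvd : d ∣ (i + 1) := by
          refine ⟨i / d + 1, ?_⟩
          rw [Nat.mul_add, Nat.mul_one]
          conv_lhs => rw [← Nat.div_add_mod i d]
          omega
        have : (i + 1) % d = 0 := Nat.dvd_iff_mod_eq_zero.mp hdvd
        rw [this]; simp
      · have hne1 : (w ^ (i % d + 1)) y ≠ a := hmina _ hlt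
        have hne2 : (w ^ (i % d + 1)) y ≠ y := hminy _ (Nat.succ_pos _) hlt
        rw [Equiv.swap_apply_of_ne_of_ne hne1 hne2]
        have h1d : (1 : ℕ) < d := by omega
        have : (i + 1) % d = i % d + 1 := by
          rw [Nat.add_mod, Nat.mod_eq_of_lt h1d, Nat.mod_eq_of_lt hlt]
        rw [this]
  intro hsc
  obtain ⟨k, -, hk⟩ := SameCycle.exists_pow_eq' hsc
  rw [key k] at hk
  exact hmina (k % d) (Nat.mod_lt _ hd0) hk

/-- monotonicity of cycles under merge. -/
lemma merge_mono {a y : Fin n} {w : Perm (Fin n)} (hay : a ≠ y)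
    (hnc : ¬ w.SameCycle a y) : orb w ≤ orb (Equiv.swap a y * w) := by
  rw [orb_le_iff]
  intro x
  show (Equiv.swap a y * w).SameCycle x (w x)
  have h1 : (Equiv.swap a y * w).SameCycle x ((Equiv.swap a y * w) x) := ⟨1, by simp⟩
  rcases eq_or_ne (w x) a with h | h
  · -- w' x = y ; need SC x (w x)=a : x ~ y ~ a
    have h2 : (Equiv.swap a y * w) x = y := by rw [swap_mul_apply, h, Equiv.swap_apply_left]
    rw [h] at *
    exact (h2 ▸ h1).trans (sameCycle_merge hay hnc)
  rcases eq_or_ne (w x) y with h' | h'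
  · have h2 : (Equiv.swap a y * w) x = a := by rw [swap_mul_apply, h', Equiv.swap_apply_right]
    rw [h'] at *
    exact (h2 ▸ h1).trans (sameCycle_merge hay hnc).symm
  · have h2 : (Equiv.swap a y * w) x = w x := by
      rw [swap_mul_apply, Equiv.swap_apply_of_ne_of_ne h h']
    exact h2 ▸ h1

/-- CL3: characterization of cycles after merging. -/
lemma merge_char {a y : Fin n} {w : Perm (Fin n)} (hay : a ≠ y)
    (hnc : ¬ w.SameCycle a y) (u v : Fin n) :
    (Equiv.swap a y * w).SameCycle u v ↔
      w.SameCycle u v ∨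
        ((w.SameCycle u a ∨ w.SameCycle u y) ∧ (w.SameCycle v a ∨ w.SameCycle v y)) := by
  constructor
  · intro h
    -- build the coarser setoid
    set s : Setoid (Fin n) :=
      ⟨fun p q => w.SameCycle p q ∨
        ((w.SameCycle p a ∨ w.SameCycle p y) ∧ (w.SameCycle q a ∨ w.SameCycle q y)),
       ⟨fun p => Or.inl (SameCycle.refl w p),
        by
          rintro p q (h | ⟨h1, h2⟩)
          · exact Or.inl h.symm
          · exact Or.inr ⟨h2, h1⟩,
        by
          rintro p q r (hpq | ⟨h1, h2⟩) (hqr | ⟨h3, h4⟩)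
          · exact Or.inl (hpq.trans hqr)
          · refine Or.inr ⟨?_, h4⟩
            rcases h3 with h3 | h3
            · exact Or.inl (hpq.trans h3)
            · exact Or.inr (hpq.trans h3)
          · refine Or.inr ⟨h1, ?_⟩
            rcases h2 with h2 | h2
            · exact Or.inl (hqr.symm.trans h2)
            · exact Or.inr (hqr.symm.trans h2)
          · exact Or.inr ⟨h1, h4⟩⟩⟩ with hs
    have hle : orb (Equiv.swap a y * w) ≤ s := by
      rw [orb_le_iff]
      intro x
      show s x ((Equiv.swap a y * w) x)
      rcases eq_or_ne (w x) a with hh | hh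
      · have h2 : (Equiv.swap a y * w) x = y := by rw [swap_mul_apply, hh, Equiv.swap_apply_left]
        rw [h2]
        exact Or.inr ⟨Or.inl ⟨1, by simp [hh]⟩, Or.inr (SameCycle.refl w y)⟩
      rcases eq_or_ne (w x) y with hh' | hh'
      · have h2 : (Equiv.swap a y * w) x = a := by rw [swap_mul_apply, hh', Equiv.swap_apply_right]
        rw [h2]
        exact Or.inr ⟨Or.inr ⟨1, by simp [hh']⟩, Or.inl (SameCycle.refl w a)⟩
      · have h2 : (Equiv.swap a y * w) x = w x := by
          rw [swap_mul_apply, Equiv.swap_apply_of_ne_of_ne hh hh']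
        rw [h2]
        exact Or.inl ⟨1, by simp⟩
    exact Setoid.le_def.mp hle h
  · rintro (h | ⟨h1, h2⟩)
    · exact Setoid.le_def.mp (merge_mono hay hnc) h
    · have hya : (Equiv.swap a y * w).SameCycle y a := sameCycle_merge hay hnc
      have lift : ∀ p, (w.SameCycle p a ∨ w.SameCycle p y) → (Equiv.swap a y * w).SameCycle p a := by
        intro p hp
        rcases hp with hp | hp
        · exact Setoid.le_def.mp (merge_mono hay hnc) hp
        · exact (Setoid.le_def.mp (merge_mono hay hnc) hp).trans hya
      exact (lift u h1).trans (lift v h2).symm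

/-- CL4: characterization of cycles after splitting. -/
lemma split_char {a y : Fin n} {w : Perm (Fin n)} (hay : a ≠ y)
    (hc : w.SameCycle a y) (u v : Fin n) :
    w.SameCycle u v ↔
      (Equiv.swap a y * w).SameCycle u v ∨
        (((Equiv.swap a y * w).SameCycle u a ∨ (Equiv.swap a y * w).SameCycle u y) ∧
         ((Equiv.swap a y * w).SameCycle v a ∨ (Equiv.swap a y * w).SameCycle v y)) := by
  have hnc : ¬ (Equiv.swap a y * w).SameCycle a y :=
    fun h => split_not_sameCycle hay hc h.symm
  have := merge_char hay hnc u v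
  rwa [← mul_assoc, Equiv.swap_mul_self, one_mul] at this

/-- locality: a swap inside one block of `π` does not affect cycles elsewhere. -/
lemma local_sameCycle {π : Setoid (Fin n)} {u : Perm (Fin n)} (hu : ∀ x, π x (u x))
    {b z : Fin n} (hbz : π b z) {x : Fin n} (hx : ¬ π x b) (v : Fin n) :
    (Equiv.swap b z * u).SameCycle x v ↔ u.SameCycle x v := by
  have key : ∀ k : ℕ, ((Equiv.swap b z * u) ^ k) x = (u ^ k) x := by
    intro k
    apply pow_swap_mul_eq
    intro j hj0 hjk
    constructor
    · intro hb; exact hx (hb ▸ setoid_pow hu j x)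
    · intro hz
      exact hx (π.trans (hz ▸ setoid_pow hu j x) (π.symm hbz))
  constructor
  · intro h
    obtain ⟨k, -, hk⟩ := SameCycle.exists_pow_eq' h
    exact ⟨k, by rw [zpow_natCast, ← key k, hk]⟩
  · intro h
    obtain ⟨k, -, hk⟩ := SameCycle.exists_pow_eq' h
    exact ⟨k, by rw [zpow_natCast, key k, hk]⟩


def sgnQ (w : Perm (Fin n)) : ℚ := ((Perm.sign w : ℤ) : ℚ)

lemma sgnQ_swap_mul {a y : Fin n} (hay : a ≠ y) (w : Perm (Fin n)) :
    sgnQ (Equiv.swap a y * w) = - sgnQ w := by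
  unfold sgnQ
  rw [Equiv.Perm.sign_mul, Equiv.Perm.sign_swap hay]
  push_cast
  ring

lemma sgnQ_ne_zero (w : Perm (Fin n)) : sgnQ w ≠ 0 := by
  unfold sgnQ
  rcases Int.units_eq_one_or (Perm.sign w) with h | h <;> rw [h] <;> norm_num

lemma sgnQ_one : sgnQ (1 : Perm (Fin n)) = 1 := by unfold sgnQ; simp

lemma mem_classes_orb {w : Perm (Fin n)} {c : Set (Fin n)} :
    c ∈ (orb w).classes ↔ ∃ q, c = {p | w.SameCycle p q} := Iff.rfl

lemma orb_class_mem (w : Perm (Fin n)) (x : Fin n) :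
    {q | w.SameCycle q x} ∈ (orb w).classes := Setoid.mem_classes (orb w) x

lemma orb_class_eq {w : Perm (Fin n)} {x y : Fin n} (h : w.SameCycle x y) :
    {q | w.SameCycle q x} = {q | w.SameCycle q y} := by
  ext q; exact ⟨fun hq => hq.trans h, fun hq => hq.trans h.symm⟩

lemma classes_bot_ncard : ((⊥ : Setoid (Fin n)).classes).ncard = n := by
  have hbot : ∀ y : Fin n, {x | (⊥ : Setoid (Fin n)) x y} = ({y} : Set (Fin n)) := by
    intro y
    ext q
    simp only [Set.mem_setOf_eq, Set.mem_singleton_iff]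
    exact ⟨fun h => h, fun h => h⟩
  have h : (⊥ : Setoid (Fin n)).classes = Set.range (fun x : Fin n => ({x} : Set (Fin n))) := by
    ext c
    constructor
    · rintro ⟨y, rfl⟩
      exact ⟨y, (hbot y).symm⟩
    · rintro ⟨y, rfl⟩
      exact ⟨y, (hbot y).symm⟩
  rw [h, ← Set.image_univ, Set.ncard_image_of_injective _ Set.singleton_injective,
    Set.ncard_univ, Nat.card_eq_fintype_card, Fintype.card_fin]

lemma orb_one_eq_bot : orb (1 : Perm (Fin n)) = (⊥ : Setoid (Fin n)) := by
  apply Setoid.ext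
  intro x y
  constructor
  · intro h
    exact Equiv.Perm.sameCycle_one.mp h
  · intro h
    exact (show x = y from h) ▸ SameCycle.refl 1 x

lemma fixed_orbit {u : Perm (Fin n)} {x : Fin n} (h : u x = x) {q : Fin n}
    (hq : u.SameCycle x q) : q = x := by
  obtain ⟨k, -, hk⟩ := SameCycle.exists_pow_eq' hq
  have hm : ∀ m : ℕ, (u ^ m) x = x := by
    intro m
    induction m with
    | zero => rfl
    | succ m ih =>
      rw [pow_succ' u m]
      show u ((u ^ m) x) = x
      rw [ih, h]
  rw [← hk, hm]

/-- Key sign lemma: `sgn w * (-1)^{#cycles} = (-1)^n`. -/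
lemma sgnQ_mul_classes (w : Perm (Fin n)) :
    sgnQ w * (-1 : ℚ) ^ ((orb w).classes.ncard) = (-1 : ℚ) ^ n := by
  generalize hcard : w.support.card = N
  induction N using Nat.strong_induction_on generalizing w with
  | _ N ih =>
  rcases eq_or_ne w 1 with rfl | hw
  · rw [orb_one_eq_bot, classes_bot_ncard, sgnQ_one, one_mul]
  · obtain ⟨x, hx⟩ : ∃ x, w x ≠ x := by
      by_contra hc
      push_neg at hc
      exact hw (Equiv.ext fun z => hc z)
    set y := w x with hy
    set w'' := Equiv.swap x y * w with hw''
    have hxy : x ≠ y := Ne.symm hx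
    have hfix : w'' x = x := by
      rw [hw'', swap_mul_apply, ← hy, Equiv.swap_apply_right]
    have hncW : ¬ w''.SameCycle x y := fun h => hxy ((fixed_orbit hfix h).symm)
    have hback : Equiv.swap x y * w'' = w := by
      rw [hw'', ← mul_assoc, Equiv.swap_mul_self, one_mul]
    have hmono : ∀ {p q : Fin n}, w''.SameCycle p q → w.SameCycle p q := by
      intro p q h
      have := Setoid.le_def.mp (merge_mono hxy hncW) (show (orb w'') p q from h)
      rwa [hback] at this
    have hchar : ∀ u v : Fin n, w.SameCycle u v ↔
        w''.SameCycle u v ∨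
          ((w''.SameCycle u x ∨ w''.SameCycle u y) ∧ (w''.SameCycle v x ∨ w''.SameCycle v y)) := by
      intro u v
      have := merge_char hxy hncW u v
      rwa [hback] at this
    have hSCx : ∀ q : Fin n, w''.SameCycle q x ↔ q = x :=
      fun q => ⟨fun h => fixed_orbit hfix h.symm, fun h => h ▸ SameCycle.refl _ _⟩
    have hWxy : w.SameCycle x y := ⟨1, by simp [hy]⟩
    -- support decreases
    have hssub : w''.support ⊂ w.support := by
      constructor
      · intro z hz
        rw [Equiv.Perm.mem_support] at hz ⊢
        intro hzz
        apply hz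
        have hzx : z ≠ x := by
          intro h
          rw [h] at hzz
          exact hx hzz
        have hzy : z ≠ y := by
          intro h
          have h1 : w y = y := h ▸ hzz
          exact hxy (w.injective (hy.symm.trans h1.symm))
        rw [hw'', swap_mul_apply, hzz, Equiv.swap_apply_of_ne_of_ne hzx hzy]
      · intro hsub'
        exact (Equiv.Perm.mem_support.mp (hsub' (Equiv.Perm.mem_support.mpr hx))) hfix
    have hcard'' : w''.support.card < N := hcard ▸ Finset.card_lt_card hssub
    have IH := ih _ hcard'' w'' rfl
    -- class surgery
    set C : Set (Fin n) := {q | w.SameCycle q x} with hC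
    set D : Set (Fin n) := {q | w''.SameCycle q y} with hD
    have hyC : y ∈ C := hWxy.symm
    have hxC : x ∈ C := SameCycle.refl _ _
    have hxD : x ∉ D := fun h => hncW (show w''.SameCycle x y from h)
    have hDC : ∀ q, q ∈ D → q ∈ C ∧ q ≠ x := by
      intro q hq
      have h1 : w.SameCycle q y := hmono hq
      refine ⟨h1.trans hWxy.symm, ?_⟩
      intro h
      exact hxD (h ▸ hq)
    have hCD : ∀ q, q ∈ C → q ≠ x → q ∈ D := by
      intro q hq hqx
      have h1 : w.SameCycle q y := hq.trans hWxy
      rcases (hchar q y).mp h1 with h | ⟨h2, -⟩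
      · exact h
      · rcases h2 with h2 | h2
        · exact absurd ((hSCx q).mp h2) hqx
        · exact h2
    have hclassfix : {p | w''.SameCycle p x} = ({x} : Set (Fin n)) := by
      ext p; simp only [Set.mem_setOf_eq, Set.mem_singleton_iff]; exact hSCx p
    have hF1 : ∀ q : Fin n, ¬ w.SameCycle q x →
        {p | w''.SameCycle p q} = {p | w.SameCycle p q} := by
      intro q hq
      ext p
      simp only [Set.mem_setOf_eq]
      constructor
      · exact fun h => hmono h
      · intro h
        rcases (hchar p q).mp h with h' | ⟨-, h2⟩
        · exact h'
        · rcases h2 with h2 | h2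
          · exact absurd (((hSCx q).mp h2) ▸ SameCycle.refl w x) hq
          · exact absurd ((hmono h2).trans hWxy.symm) hq
    have hsurg : (orb w'').classes = ((orb w).classes \ {C}) ∪ {({x} : Set (Fin n)), D} := by
      ext c
      constructor
      · intro hcm
        obtain ⟨q, rfl⟩ := mem_classes_orb.mp hcm
        by_cases hqx : q = x
        · subst hqx
          right; left
          exact hclassfix
        by_cases hq : w.SameCycle q x
        · right; right
          have hqD : q ∈ D := hCD q hq hqx
          show {p | w''.SameCycle p q} = D
          ext p
          simp only [Set.mem_setOf_eq, hD]
          exact ⟨fun h => h.trans hqD, fun h => h.trans (show w''.SameCycle y q from hqD.symm)⟩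
        · left
          refine ⟨mem_classes_orb.mpr ⟨q, (hF1 q hq)⟩, ?_⟩
          intro hc
          rw [Set.mem_singleton_iff] at hc
          rw [hF1 q hq, hC] at hc
          have : x ∈ {p | w.SameCycle p q} := by rw [hc]; exact hxC
          exact hq (SameCycle.symm this)
      · intro hc
        rcases hc with ⟨hmem, hne⟩ | hc
        · obtain ⟨q, rfl⟩ := mem_classes_orb.mp hmem
          have hq : ¬ w.SameCycle q x := by
            intro h
            apply hne
            rw [Set.mem_singleton_iff, hC]
            exact orb_class_eq h
          exact mem_classes_orb.mpr ⟨q, (hF1 q hq).symm⟩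
        · rcases hc with hc | hc
          · rw [hc]
            exact mem_classes_orb.mpr ⟨x, hclassfix.symm⟩
          · rw [hc]
            exact mem_classes_orb.mpr ⟨y, rfl⟩
    -- cardinality bump
    have hCA : C ∈ (orb w).classes := orb_class_mem w x
    have hxnot : ({x} : Set (Fin n)) ∉ (orb w).classes \ {C} := by
      rintro ⟨hmem, -⟩
      obtain ⟨q, hq⟩ := mem_classes_orb.mp hmem
      have hqmem : q ∈ ({x} : Set (Fin n)) := by
        rw [hq]; exact SameCycle.refl w q
      rw [Set.mem_singleton_iff] at hqmem
      rw [hqmem] at hq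
      have hymem : y ∈ ({x} : Set (Fin n)) := by rw [hq]; exact hWxy.symm
      have hyx : y = x := by simpa using hymem
      exact hxy hyx.symm
    have hDnot : D ∉ (orb w).classes \ {C} := by
      rintro ⟨hmem, hne⟩
      obtain ⟨q, hq⟩ := mem_classes_orb.mp hmem
      apply hne
      rw [Set.mem_singleton_iff]
      have hqD : q ∈ D := by rw [hq]; exact SameCycle.refl w q
      have := (hDC q hqD).1
      rw [hq, hC]
      exact orb_class_eq this
    have hxD' : ({x} : Set (Fin n)) ≠ D := by
      intro h
      apply hxD
      rw [← h]
      exact rfl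
    have hdisj : Disjoint ((orb w).classes \ {C}) {({x} : Set (Fin n)), D} := by
      rw [Set.disjoint_right]
      intro c hc
      rcases hc with hc | hc
      · rw [hc]; exact hxnot
      · rw [Set.mem_singleton_iff] at hc; rw [hc]; exact hDnot
    have hcount : (orb w'').classes.ncard = (orb w).classes.ncard + 1 := by
      rw [hsurg, Set.ncard_union_eq hdisj, Set.ncard_pair hxD']
      have := Set.ncard_diff_singleton_add_one hCA ((orb w).classes.toFinite)
      omega
    -- combine
    have hsgn : sgnQ w = - sgnQ w'' := by
      rw [← hback, sgnQ_swap_mul hxy]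
    rw [hcount, pow_succ] at IH
    rw [hsgn]
    linear_combination IH


/-! ### Algebraic layer -/

/-- signed count of permutations with orbit setoid `τ` -/
def Mfun (τ : Setoid (Fin n)) : ℚ :=
  ∑ w : Perm (Fin n), if orb w = τ then sgnQ w else 0

lemma setoid_swap_stable {ρ : Setoid (Fin n)} {i j : Fin n} (hij : ρ i j) {x v : Fin n}
    (h : ρ x v) : ρ x (Equiv.swap i j v) := by
  rcases eq_or_ne v i with rfl | hvi
  · rw [Equiv.swap_apply_left]; exact ρ.trans h hij
  rcases eq_or_ne v j with rfl | hvj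
  · rw [Equiv.swap_apply_right]; exact ρ.trans h (ρ.symm hij)
  · rw [Equiv.swap_apply_of_ne_of_ne hvi hvj]; exact h

lemma orb_swap_mul_le {ρ : Setoid (Fin n)} {i j : Fin n} (hij : ρ i j) {w : Perm (Fin n)}
    (hw : orb w ≤ ρ) : orb (Equiv.swap i j * w) ≤ ρ := by
  rw [orb_le_iff]
  intro x
  rw [swap_mul_apply]
  exact setoid_swap_stable hij (orb_le_iff.mp hw x)

lemma orb_le_bot_iff {w : Perm (Fin n)} : orb w ≤ (⊥ : Setoid (Fin n)) ↔ w = 1 := by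
  constructor
  · intro h
    apply Equiv.ext
    intro x
    exact (show x = w x from orb_le_iff.mp h x).symm
  · rintro rfl
    rw [orb_one_eq_bot]

lemma sum_Mfun (ρ : Setoid (Fin n)) :
    (∑ τ : Setoid (Fin n), if τ ≤ ρ then Mfun τ else 0) = if ρ = ⊥ then 1 else 0 := by
  have step1 : (∑ τ : Setoid (Fin n), if τ ≤ ρ then Mfun τ else 0)
      = ∑ w : Perm (Fin n), if orb w ≤ ρ then sgnQ w else 0 := by
    have e1 : ∀ τ : Setoid (Fin n), (if τ ≤ ρ then Mfun τ else 0)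
        = ∑ w : Perm (Fin n), if τ ≤ ρ then (if orb w = τ then sgnQ w else 0) else 0 := by
      intro τ
      by_cases h : τ ≤ ρ
      · simp only [h, if_true]; rfl
      · simp only [h, if_false, Finset.sum_const_zero]
    rw [Finset.sum_congr rfl fun τ _ => e1 τ, Finset.sum_comm]
    refine Finset.sum_congr rfl fun w _ => ?_
    rw [Finset.sum_eq_single (orb w)]
    · by_cases h : orb w ≤ ρ <;> simp [h]
    · intro τ _ hτ
      by_cases h : τ ≤ ρ <;> simp [h, Ne.symm hτ]
    · intro h; exact absurd (Finset.mem_univ _) h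
  rw [step1]
  by_cases hρ : ρ = ⊥
  · rw [if_pos hρ, Finset.sum_eq_single (1 : Perm (Fin n))]
    · rw [if_pos (by rw [hρ]; exact orb_le_bot_iff.mpr rfl), sgnQ_one]
    · intro w _ hw
      rw [if_neg (fun h => hw (orb_le_bot_iff.mp (hρ ▸ h)))]
    · intro h; exact absurd (Finset.mem_univ _) h
  · rw [if_neg hρ]
    obtain ⟨i, j, hij, hne⟩ : ∃ i j : Fin n, ρ i j ∧ i ≠ j := by
      by_contra hc
      push_neg at hc
      apply hρ
      apply le_antisymm _ bot_le
      rw [Setoid.le_def]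
      intro x y hxy
      by_cases h : x = y
      · show ⇑(⊥ : Setoid (Fin n)) x y
        rw [Setoid.bot_def]
        exact h
      · exact absurd hxy (fun hh => h (hc x y hh))
    rw [← Finset.sum_filter]
    refine Finset.sum_involution (fun w _ => Equiv.swap i j * w) ?_ ?_ ?_ ?_
    · intro w _
      rw [sgnQ_swap_mul hne]
      ring
    · intro w _ _
      intro hcontra
      have : Equiv.swap i j = 1 := by
        have := congrArg (· * w⁻¹) hcontra
        simpa [mul_assoc] using this
      exact hne (Equiv.swap_eq_one_iff.mp this)
    · intro w hw
      simp only [Finset.mem_filter, Finset.mem_univ, true_and] at hw ⊢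
      exact orb_swap_mul_le hij hw
    · intro w _
      show Equiv.swap i j * (Equiv.swap i j * w) = w
      rw [← mul_assoc, Equiv.swap_mul_self, one_mul]

/-- the set of permutations relevant for the coefficient of `x_σ` in `e_π` -/
def WS (σ π : Setoid (Fin n)) : Finset (Perm (Fin n)) :=
  Finset.univ.filter (fun w => σ ≤ orb w ∧ orb w ≤ π)


/-! ### Möbius uniqueness and expansion -/

lemma sum_le_split (τ : Setoid (Fin n)) (f : Setoid (Fin n) → ℚ) :
    (∑ q : Setoid (Fin n), if q ≤ τ then f q else 0)
      = f τ + ∑ q : Setoid (Fin n), if q < τ then f q else 0 := by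
  have key : ∀ q : Setoid (Fin n), (if q ≤ τ then f q else 0)
      = (if q = τ then f q else 0) + (if q < τ then f q else 0) := by
    intro q
    by_cases h1 : q = τ
    · subst h1; simp [lt_irrefl]
    · by_cases h2 : q < τ
      · simp [h1, h2, le_of_lt h2]
      · have h3 : ¬ q ≤ τ := fun h => (lt_or_eq_of_le h).elim h2 h1
        simp [h1, h2, h3]
  rw [Finset.sum_congr rfl fun q _ => key q, Finset.sum_add_distrib]
  congr 1
  rw [Finset.sum_ite_eq' Finset.univ τ f]
  simp

lemma mu_eq_Mfun {mu : Setoid (Fin n) → Setoid (Fin n) → ℚ} (hmu : MoebiusPi n mu) :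
    ∀ τ : Setoid (Fin n), mu ⊥ τ = Mfun τ := by
  have wf : WellFounded ((· < ·) : Setoid (Fin n) → Setoid (Fin n) → Prop) := IsWellFounded.wf
  intro τ
  induction τ using WellFounded.induction wf with
  | _ τ ih =>
  have h1 := hmu ⊥ τ bot_le
  have h2 := sum_Mfun τ
  have h1' : (∑ q : Setoid (Fin n), if q ≤ τ then mu ⊥ q else 0) = if τ = ⊥ then 1 else 0 := by
    rw [show ((if τ = ⊥ then (1:ℚ) else 0) = if (⊥ : Setoid (Fin n)) = τ then 1 else 0) from by
      by_cases h : τ = ⊥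
      · simp [h]
      · rw [if_neg h, if_neg (fun hh : (⊥ : Setoid (Fin n)) = τ => h hh.symm)],
      ← h1]
    refine Finset.sum_congr rfl fun q _ => ?_
    have hiff : ((⊥ : Setoid (Fin n)) ≤ q ∧ q ≤ τ) ↔ q ≤ τ := ⟨fun h => h.2, fun h => ⟨bot_le, h⟩⟩
    rw [if_congr hiff rfl rfl]
  rw [sum_le_split] at h1' h2
  have h3 : (∑ q : Setoid (Fin n), if q < τ then mu ⊥ q else 0)
      = ∑ q : Setoid (Fin n), if q < τ then Mfun q else 0 :=
    Finset.sum_congr rfl fun q _ => by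
      by_cases h : q < τ
      · simp only [h, if_true]; exact ih q h
      · simp [h]
  rw [h3] at h1'
  linarith [h1', h2]

lemma pfun_eq (τ : Setoid (Fin n)) (v : Fin n → ℕ) :
    pfun τ v = if τ ≤ Setoid.ker v then (1:ℚ) else 0 := by
  unfold pfun
  refine if_congr ?_ rfl rfl
  constructor
  · intro h
    rw [Setoid.le_def]
    intro x y hxy
    rw [Setoid.ker_def]
    exact h x y hxy
  · intro h i j hij
    exact Setoid.ker_def.mp (Setoid.le_def.mp h hij)

lemma efun_eq (π : Setoid (Fin n)) (v : Fin n → ℕ) :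
    efun π v = if (⊥ : Setoid (Fin n)) = π ⊓ Setoid.ker v then (1:ℚ) else 0 := by
  unfold efun
  refine if_congr ?_ rfl rfl
  constructor
  · intro h
    apply le_antisymm bot_le
    rw [Setoid.le_def]
    intro x y hxy
    have hxy' := Setoid.inf_iff_and.mp hxy
    show ⇑(⊥ : Setoid (Fin n)) x y
    rw [Setoid.bot_def]
    by_contra hne
    exact (h x y hne hxy'.1) (Setoid.ker_def.mp hxy'.2)
  · intro h i j hne hπ hv
    have hmem : (π ⊓ Setoid.ker v) i j :=
      Setoid.inf_iff_and.mpr ⟨hπ, Setoid.ker_def.mpr hv⟩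
    have hbot : ⇑(⊥ : Setoid (Fin n)) i j := by rw [h]; exact hmem
    rw [Setoid.bot_def] at hbot
    exact hne hbot

lemma ite_apply_zero (c : Prop) [Decidable c] (f : NCF n) (v : Fin n → ℕ) :
    (if c then f else 0) v = if c then f v else 0 := by
  split <;> rfl

lemma efun_expand {mu : Setoid (Fin n) → Setoid (Fin n) → ℚ} (hmu : MoebiusPi n mu)
    (π : Setoid (Fin n)) (v : Fin n → ℕ) :
    efun π v = ∑ τ : Setoid (Fin n), if τ ≤ π then mu ⊥ τ * pfun τ v else 0 := by
  have hh := hmu ⊥ (π ⊓ Setoid.ker v) bot_le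
  rw [efun_eq, ← hh]
  refine (Finset.sum_congr rfl fun τ _ => ?_).symm
  by_cases h1 : τ ≤ π
  · by_cases h2 : τ ≤ Setoid.ker v
    · rw [if_pos h1, pfun_eq, if_pos h2, mul_one,
        if_pos (show (⊥ : Setoid (Fin n)) ≤ τ ∧ τ ≤ π ⊓ Setoid.ker v from
          ⟨bot_le, le_inf h1 h2⟩)]
    · rw [if_pos h1, pfun_eq, if_neg h2, mul_zero, if_neg]
      rintro ⟨-, hc⟩
      exact h2 (le_trans hc inf_le_right)
  · rw [if_neg h1, if_neg]
    rintro ⟨-, hc⟩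
    exact h1 (le_trans hc inf_le_left)

lemma xf_apply {mu : Setoid (Fin n) → Setoid (Fin n) → ℚ} (s : Setoid (Fin n)) (v : Fin n → ℕ) :
    xf mu s v = ∑ ρ : Setoid (Fin n), if ρ ≤ s then mu ρ s * pfun ρ v else 0 := by
  unfold xf
  rw [Finset.sum_apply]
  refine Finset.sum_congr rfl fun ρ _ => ?_
  rw [ite_apply_zero]
  by_cases h : ρ ≤ s
  · rw [if_pos h, if_pos h, Pi.smul_apply, smul_eq_mul]
  · rw [if_neg h, if_neg h]

lemma pfun_expand {mu : Setoid (Fin n) → Setoid (Fin n) → ℚ} (hmu : MoebiusPi n mu)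
    (τ : Setoid (Fin n)) (v : Fin n → ℕ) :
    pfun τ v = ∑ s : Setoid (Fin n), if s ≤ τ then xf mu s v else 0 := by
  have step1 : (∑ s : Setoid (Fin n), if s ≤ τ then xf mu s v else 0)
      = ∑ s : Setoid (Fin n), ∑ ρ : Setoid (Fin n),
          if ρ ≤ s ∧ s ≤ τ then mu ρ s * pfun ρ v else 0 := by
    refine Finset.sum_congr rfl fun s _ => ?_
    by_cases h : s ≤ τ
    · rw [if_pos h, xf_apply]
      refine Finset.sum_congr rfl fun ρ _ => ?_
      by_cases h2 : ρ ≤ s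
      · rw [if_pos h2, if_pos ⟨h2, h⟩]
      · rw [if_neg h2, if_neg (fun hc => h2 hc.1)]
    · rw [if_neg h, eq_comm, Finset.sum_eq_zero]
      intro ρ _
      rw [if_neg (fun hc => h hc.2)]
  rw [step1, Finset.sum_comm]
  have step2 : ∀ ρ : Setoid (Fin n),
      (∑ s : Setoid (Fin n), if ρ ≤ s ∧ s ≤ τ then mu ρ s * pfun ρ v else 0)
        = (if ρ = τ then (1:ℚ) else 0) * pfun ρ v := by
    intro ρ
    have e : (∑ s : Setoid (Fin n), if ρ ≤ s ∧ s ≤ τ then mu ρ s * pfun ρ v else 0)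
        = (∑ s : Setoid (Fin n), if ρ ≤ s ∧ s ≤ τ then mu ρ s else 0) * pfun ρ v := by
      rw [Finset.sum_mul]
      refine Finset.sum_congr rfl fun s _ => ?_
      by_cases h : ρ ≤ s ∧ s ≤ τ
      · rw [if_pos h, if_pos h]
      · rw [if_neg h, if_neg h, zero_mul]
    rw [e]
    by_cases h : ρ ≤ τ
    · rw [hmu ρ τ h]
    · congr 1
      rw [Finset.sum_eq_zero, if_neg (fun hc => h (le_of_eq hc))]
      intro s _
      rw [if_neg (fun hc => h (le_trans hc.1 hc.2))]
  rw [Finset.sum_congr rfl fun ρ _ => step2 ρ]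
  have e2 : ∀ ρ : Setoid (Fin n), (if ρ = τ then (1:ℚ) else 0) * pfun ρ v
      = if ρ = τ then pfun ρ v else 0 := by
    intro ρ; by_cases h : ρ = τ <;> simp [h]
  rw [Finset.sum_congr rfl fun ρ _ => e2 ρ, Finset.sum_ite_eq' Finset.univ τ]
  simp

/-- the coefficient of `x_s` in `e_π` -/
def cQ (mu : Setoid (Fin n) → Setoid (Fin n) → ℚ) (π s : Setoid (Fin n)) : ℚ :=
  ∑ τ : Setoid (Fin n), if s ≤ τ ∧ τ ≤ π then mu ⊥ τ else 0

lemma efun_decomp {mu : Setoid (Fin n) → Setoid (Fin n) → ℚ} (hmu : MoebiusPi n mu)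
    (π : Setoid (Fin n)) :
    efun π = ∑ s : Setoid (Fin n), cQ mu π s • xf mu s := by
  funext v
  rw [Finset.sum_apply]
  rw [efun_expand hmu π v]
  have step1 : (∑ τ : Setoid (Fin n), if τ ≤ π then mu ⊥ τ * pfun τ v else 0)
      = ∑ τ : Setoid (Fin n), ∑ s : Setoid (Fin n),
          if s ≤ τ ∧ τ ≤ π then mu ⊥ τ * xf mu s v else 0 := by
    refine Finset.sum_congr rfl fun τ _ => ?_
    by_cases h : τ ≤ π
    · rw [if_pos h, pfun_expand hmu τ v, Finset.mul_sum]
      refine Finset.sum_congr rfl fun s _ => ?_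
      by_cases h2 : s ≤ τ
      · rw [if_pos h2, if_pos ⟨h2, h⟩]
      · rw [if_neg h2, if_neg (fun hc => h2 hc.1), mul_zero]
    · rw [if_neg h, eq_comm, Finset.sum_eq_zero]
      intro s _
      rw [if_neg (fun hc => h hc.2)]
  rw [step1, Finset.sum_comm]
  refine Finset.sum_congr rfl fun s _ => ?_
  rw [Pi.smul_apply, smul_eq_mul]
  unfold cQ
  rw [Finset.sum_mul]
  refine Finset.sum_congr rfl fun τ _ => ?_
  by_cases h : s ≤ τ ∧ τ ≤ π
  · rw [if_pos h, if_pos h]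
  · rw [if_neg h, if_neg h, zero_mul]

lemma cQ_eq_sum_perm {mu : Setoid (Fin n) → Setoid (Fin n) → ℚ} (hmu : MoebiusPi n mu)
    (π s : Setoid (Fin n)) :
    cQ mu π s = ∑ w ∈ WS s π, sgnQ w := by
  unfold cQ
  rw [Finset.sum_congr rfl fun τ _ => by
    rw [mu_eq_Mfun hmu τ]]
  unfold Mfun
  have step1 : (∑ τ : Setoid (Fin n), if s ≤ τ ∧ τ ≤ π
        then (∑ w : Perm (Fin n), if orb w = τ then sgnQ w else 0) else 0)
      = ∑ τ : Setoid (Fin n), ∑ w : Perm (Fin n),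
          if (s ≤ τ ∧ τ ≤ π) ∧ orb w = τ then sgnQ w else 0 := by
    refine Finset.sum_congr rfl fun τ _ => ?_
    by_cases h : s ≤ τ ∧ τ ≤ π
    · rw [if_pos h]
      refine Finset.sum_congr rfl fun w _ => ?_
      by_cases h2 : orb w = τ
      · rw [if_pos h2, if_pos ⟨h, h2⟩]
      · rw [if_neg h2, if_neg (fun hc => h2 hc.2)]
    · rw [if_neg h, eq_comm, Finset.sum_eq_zero]
      intro w _
      rw [if_neg (fun hc => h hc.1)]
  have step2 : ∀ w : Perm (Fin n),
      (∑ τ : Setoid (Fin n), if (s ≤ τ ∧ τ ≤ π) ∧ orb w = τ then sgnQ w else 0)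
        = if s ≤ orb w ∧ orb w ≤ π then sgnQ w else 0 := by
    intro w
    rw [Finset.sum_eq_single (orb w)]
    · by_cases h : s ≤ orb w ∧ orb w ≤ π
      · rw [if_pos ⟨h, rfl⟩, if_pos h]
      · rw [if_neg (fun hc => h hc.1), if_neg h]
    · intro τ _ hτ
      rw [if_neg (fun hc => hτ hc.2.symm)]
    · intro h; exact absurd (Finset.mem_univ _) h
  rw [step1, Finset.sum_comm, Finset.sum_congr rfl fun w _ => step2 w, ← Finset.sum_filter]
  rfl

lemma ncard_classes_le (π : Setoid (Fin n)) : π.classes.ncard ≤ n := by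
  by_cases hcl : π.classes = ∅
  · simp [hcl]
  · have hne : π.classes.Nonempty := Set.nonempty_iff_ne_empty.mpr hcl
    obtain ⟨c0, hc0⟩ := hne
    have hc0ne : c0.Nonempty := by
      rcases Set.eq_empty_or_nonempty c0 with h | h
      · exact absurd (h ▸ hc0) Setoid.empty_notMem_classes
      · exact h
    haveI : Nonempty (Fin n) := ⟨hc0ne.some⟩
    have hinj : Set.InjOn
        (fun c : Set (Fin n) => if h : c.Nonempty then h.some else Classical.arbitrary (Fin n))
        π.classes := by
      intro c1 h1 c2 h2 heq
      have h1ne : c1.Nonempty := by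
        rcases Set.eq_empty_or_nonempty c1 with h | h
        · exact absurd (h ▸ h1) Setoid.empty_notMem_classes
        · exact h
      have h2ne : c2.Nonempty := by
        rcases Set.eq_empty_or_nonempty c2 with h | h
        · exact absurd (h ▸ h2) Setoid.empty_notMem_classes
        · exact h
      simp only [dif_pos h1ne, dif_pos h2ne] at heq
      exact Setoid.eq_of_mem_classes h1 h1ne.some_mem h2 (heq ▸ h2ne.some_mem)
    have h := Set.ncard_le_ncard_of_injOn (s := π.classes) (t := (Set.univ : Set (Fin n)))
      (fun c : Set (Fin n) => if h : c.Nonempty then h.some else Classical.arbitrary (Fin n))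
      (fun c _ => Set.mem_univ _) hinj Set.finite_univ
    rw [Set.ncard_univ, Nat.card_eq_fintype_card, Fintype.card_fin] at h
    exact h

/-! ### The sign-reversing involution -/

/-- least element of the `π`-block of `y` -/
def bm (π : Setoid (Fin n)) (y : Fin n) : Fin n :=
  (Finset.univ.filter (fun z => π z y)).min'
    ⟨y, Finset.mem_filter.mpr ⟨Finset.mem_univ y, π.refl y⟩⟩

lemma bm_rel (π : Setoid (Fin n)) (y : Fin n) : π (bm π y) y := by
  have h := Finset.min'_mem (Finset.univ.filter (fun z => π z y))
    ⟨y, Finset.mem_filter.mpr ⟨Finset.mem_univ y, π.refl y⟩⟩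
  exact (Finset.mem_filter.mp h).2

lemma bm_le {π : Setoid (Fin n)} {z y : Fin n} (h : π z y) : bm π y ≤ z := by
  apply Finset.min'_le (Finset.univ.filter (fun z => π z y)) z
  exact Finset.mem_filter.mpr ⟨Finset.mem_univ z, h⟩

lemma bm_congr {π : Setoid (Fin n)} {y y' : Fin n} (h : π y y') : bm π y = bm π y' := by
  unfold bm
  congr 1
  ext z
  simp only [Finset.mem_filter, Finset.mem_univ, true_and]
  exact ⟨fun hz => π.trans hz h, fun hz => π.trans hz (π.symm h)⟩

lemma mem_WS {σ π : Setoid (Fin n)} {w : Perm (Fin n)} :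
    w ∈ WS σ π ↔ σ ≤ orb w ∧ orb w ≤ π := by
  unfold WS
  simp

/-- the permutation in which the minimality condition for `y` is checked -/
def uact (π : Setoid (Fin n)) (w : Perm (Fin n)) (y : Fin n) : Perm (Fin n) :=
  if w.SameCycle (bm π y) y then Equiv.swap (bm π y) y * w else w

/-- `y` is an active pivot for `w` -/
def Active (σ π : Setoid (Fin n)) (w : Perm (Fin n)) (y : Fin n) : Prop :=
  y ≠ bm π y ∧ (Equiv.swap (bm π y) y * w) ∈ WS σ π ∧
    ∀ z, (uact π w y).SameCycle y z → y ≤ z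

/-- merging two cycles inside one block stays in `WS`. -/
lemma merge_mem {σ π : Setoid (Fin n)} {w : Perm (Fin n)} (hw : w ∈ WS σ π)
    {a y : Fin n} (hπ : π a y) (hay : a ≠ y) (hnc : ¬ w.SameCycle a y) :
    Equiv.swap a y * w ∈ WS σ π := by
  rw [mem_WS] at hw ⊢
  exact ⟨le_trans hw.1 (merge_mono hay hnc), orb_swap_mul_le hπ hw.2⟩

lemma swap_comm_of_ne {a y b z : Fin n} (h1 : b ≠ a) (h2 : b ≠ y) (h3 : z ≠ a) (h4 : z ≠ y) :
    Equiv.swap b z * Equiv.swap a y = Equiv.swap a y * Equiv.swap b z := by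
  apply Equiv.ext
  intro x
  simp only [Equiv.Perm.mul_apply, Equiv.swap_apply_def]
  split_ifs <;> simp_all

/-- `swap a z * swap a y = swap z y * swap a z` for distinct `a, y, z`. -/
lemma swap_triple {a y z : Fin n} (hay : a ≠ y) (haz : a ≠ z) (hyz : y ≠ z) :
    Equiv.swap a z * Equiv.swap a y = Equiv.swap z y * Equiv.swap a z := by
  apply Equiv.ext
  intro x
  simp only [Equiv.Perm.mul_apply, Equiv.swap_apply_def]
  split_ifs <;> simp_all

lemma orb_le_pointwise {π : Setoid (Fin n)} {w : Perm (Fin n)} (h : orb w ≤ π) :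
    ∀ x, π x (w x) := orb_le_iff.mp h

lemma ws_sc_mono {σ π : Setoid (Fin n)} {w : Perm (Fin n)} (hw : w ∈ WS σ π)
    {u v : Fin n} (h : σ u v) : w.SameCycle u v :=
  Setoid.le_def.mp (mem_WS.mp hw).1 h

/-- after toggling at the pivot `y`, `y` is still active (with identical minimality set). -/
lemma active_again {σ π : Setoid (Fin n)} {w : Perm (Fin n)} (hw : w ∈ WS σ π)
    {y : Fin n} (hy : Active σ π w y) :
    Active σ π (Equiv.swap (bm π y) y * w) y := by
  obtain ⟨h1, h2, h3⟩ := hy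
  have hay : bm π y ≠ y := Ne.symm h1
  refine ⟨h1, ?_, ?_⟩
  · rw [← mul_assoc, Equiv.swap_mul_self, one_mul]
    exact hw
  · intro z hz
    apply h3 z
    unfold uact at hz ⊢
    by_cases hc : w.SameCycle (bm π y) y
    · have hnc' : ¬ (Equiv.swap (bm π y) y * w).SameCycle (bm π y) y :=
        fun hcon => split_not_sameCycle hay hc hcon.symm
      rw [if_neg hnc'] at hz
      rw [if_pos hc]
      exact hz
    · have hc' : (Equiv.swap (bm π y) y * w).SameCycle (bm π y) y :=
        (sameCycle_merge hay hc).symm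
      rw [if_pos hc', ← mul_assoc, Equiv.swap_mul_self, one_mul] at hz
      rw [if_neg hc]
      exact hz

/-- a permutation in `WS` with no active pivot has `orb w = π`. -/
lemma fix_orb_eq {σ π : Setoid (Fin n)} {w : Perm (Fin n)} (hw : w ∈ WS σ π)
    (hfix : ∀ y, ¬ Active σ π w y) : orb w = π := by
  apply le_antisymm (mem_WS.mp hw).2
  rw [Setoid.le_def]
  intro x x' hxx'
  by_contra hne
  have hax : π (bm π x) x := bm_rel π x
  obtain ⟨c, hcx, hnc⟩ : ∃ c, π c x ∧ ¬ w.SameCycle (bm π x) c := by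
    by_cases h : w.SameCycle (bm π x) x
    · refine ⟨x', π.symm hxx', fun hcon => hne (h.symm.trans hcon)⟩
    · exact ⟨x, π.refl x, h⟩
  have hcne : (Finset.univ.filter (fun q => w.SameCycle c q)).Nonempty :=
    ⟨c, Finset.mem_filter.mpr ⟨Finset.mem_univ c, SameCycle.refl w c⟩⟩
  set Y := (Finset.univ.filter (fun q => w.SameCycle c q)).min' hcne with hY
  have hYc : w.SameCycle c Y :=
    (Finset.mem_filter.mp (Finset.min'_mem _ hcne)).2
  have hYmin : ∀ q, w.SameCycle c q → Y ≤ q := by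
    intro q hq
    exact Finset.min'_le _ q (Finset.mem_filter.mpr ⟨Finset.mem_univ q, hq⟩)
  have hπcY : π c Y := orb_le_pointwise (mem_WS.mp hw).2 c |> fun _ => Setoid.le_def.mp (mem_WS.mp hw).2 hYc
  have hπYx : π Y x := π.trans (π.symm hπcY) hcx
  have hbmY : bm π Y = bm π x := bm_congr hπYx
  have hnSCaY : ¬ w.SameCycle (bm π Y) Y := by
    rw [hbmY]
    intro hcon
    exact hnc (hcon.trans hYc.symm)
  have hYnea : Y ≠ bm π Y := by
    intro hcon
    exact hnSCaY (hcon ▸ SameCycle.refl w Y)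
  apply hfix Y
  refine ⟨hYnea, ?_, ?_⟩
  · apply merge_mem hw _ (Ne.symm hYnea) hnSCaY
    exact π.trans (hbmY ▸ (π.trans hax (π.symm hπYx)) : π (bm π Y) Y) (π.refl Y)
  · intro q hq
    unfold uact at hq
    rw [if_neg hnSCaY] at hq
    exact hYmin q (hYc.trans hq)

lemma sc_mono_merge {a y : Fin n} {w : Perm (Fin n)} (hay : a ≠ y) (hnc : ¬ w.SameCycle a y)
    {p q : Fin n} (h : w.SameCycle p q) : (Equiv.swap a y * w).SameCycle p q :=
  Setoid.le_def.mp (merge_mono hay hnc) (show (orb w) p q from h)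

lemma sc_mono_split {a y : Fin n} {w : Perm (Fin n)} (hay : a ≠ y) (hc : w.SameCycle a y)
    {p q : Fin n} (h : (Equiv.swap a y * w).SameCycle p q) : w.SameCycle p q :=
  (split_char hay hc p q).mpr (Or.inl h)

/-- O2b: after toggling at the minimal pivot `y`, no smaller pivot becomes active. -/
lemma active_min_stable {σ π : Setoid (Fin n)} {w : Perm (Fin n)} (hw : w ∈ WS σ π)
    {y : Fin n} (hy : Active σ π w y) (hmin : ∀ z, Active σ π w z → y ≤ z)
    {z : Fin n} (hz : Active σ π (Equiv.swap (bm π y) y * w) z) : y ≤ z := by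
  obtain ⟨hy1, hy2, hy3⟩ := hy
  have hay : bm π y ≠ y := Ne.symm hy1
  have hπay : π (bm π y) y := bm_rel π y
  by_contra hyz'
  push_neg at hyz'
  have hzy : z ≠ y := ne_of_lt hyz'
  obtain ⟨hz1, hz2, hz3⟩ := hz
  unfold uact at hz3 hy3
  have hptw : ∀ x, π x (w x) := orb_le_pointwise (mem_WS.mp hw).2
  by_cases hblock : π z y
  case pos =>
    -- same block; the block minimum is a := bm π y
    have hbmz : bm π z = bm π y := bm_congr hblock
    rw [hbmz] at hz1 hz2 hz3
    have hza : z ≠ bm π y := hz1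
    have haz : bm π y ≠ z := Ne.symm hza
    have hπaz : π (bm π y) z := π.trans hπay (π.symm hblock)
    by_cases hc : w.SameCycle (bm π y) y
    case pos =>
      -- ORIGINAL SPLIT: w' = swap a y * w separates the cycle of a
      rw [if_pos hc] at hy3
      have hsep : ¬ (Equiv.swap (bm π y) y * w).SameCycle (bm π y) y :=
        fun hcon => split_not_sameCycle hay hc hcon.symm
      by_cases hg1 : (Equiv.swap (bm π y) y * w).SameCycle y z
      · exact absurd (hy3 z hg1) (not_le.mpr hyz')
      by_cases hg3 : (Equiv.swap (bm π y) y * w).SameCycle (bm π y) z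
      · -- subcase g3 : z in the cycle of a of w'
        rw [if_pos hg3] at hz3
        have hwaz : w.SameCycle (bm π y) z := by
          have h := sc_mono_merge hay hsep hg3
          rwa [← mul_assoc, Equiv.swap_mul_self, one_mul] at h
        have hnzy : ¬ (Equiv.swap (bm π y) z * (Equiv.swap (bm π y) y * w)).SameCycle z y :=
          fun hcon => hg1 ((sc_mono_split haz hg3 hcon).symm)
        have htriple : Equiv.swap (bm π y) z * w
            = Equiv.swap z y * (Equiv.swap (bm π y) z * (Equiv.swap (bm π y) y * w)) := by
          symm
          calc Equiv.swap z y * (Equiv.swap (bm π y) z * (Equiv.swap (bm π y) y * w))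
              = (Equiv.swap z y * Equiv.swap (bm π y) z)
                  * (Equiv.swap (bm π y) y * w) := by rw [mul_assoc]
            _ = (Equiv.swap (bm π y) z * Equiv.swap (bm π y) y)
                  * (Equiv.swap (bm π y) y * w) := by
                rw [← swap_triple hay haz (Ne.symm hzy)]
            _ = Equiv.swap (bm π y) z * w := by
                rw [mul_assoc, ← mul_assoc (Equiv.swap (bm π y) y), Equiv.swap_mul_self, one_mul]
        have hActz : Active σ π w z := by
          unfold Active uact
          rw [hbmz]
          refine ⟨hz1, ?_, ?_⟩
          · rw [htriple]
            exact merge_mem hz2 hblock hzy hnzy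
          · intro q hq
            rw [if_pos hwaz, htriple] at hq
            rcases (merge_char hzy hnzy z q).mp hq with h | ⟨-, hq2⟩
            · exact hz3 q h
            · rcases hq2 with h | h
              · exact hz3 q h.symm
              · exact le_trans (le_of_lt hyz') (hy3 q (sc_mono_split haz hg3 h).symm)
        exact absurd (hmin z hActz) (not_le.mpr hyz')
      · -- subcase g2 : cycle of z untouched by the original split
        rw [if_neg hg3] at hz3
        have hnc_waz : ¬ w.SameCycle (bm π y) z := by
          intro hcon
          rcases (merge_char hay hsep (bm π y) z).mp
            (by rw [← mul_assoc, Equiv.swap_mul_self, one_mul]; exact hcon) with h | ⟨-, h2⟩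
          · exact hg3 h
          · rcases h2 with h | h
            · exact hg3 h.symm
            · exact hg1 h.symm
        have hActz : Active σ π w z := by
          unfold Active uact
          rw [hbmz]
          refine ⟨hz1, merge_mem hw hπaz haz hnc_waz, ?_⟩
          intro q hq
          rw [if_neg hnc_waz] at hq
          have hq' : w.SameCycle z q := hq
          rcases (merge_char hay hsep z q).mp
            (by rw [← mul_assoc, Equiv.swap_mul_self, one_mul]; exact hq') with h | ⟨h1, -⟩
          · exact hz3 q h
          · rcases h1 with h | h
            · exact absurd h.symm hg3
            · exact absurd h.symm hg1
        exact absurd (hmin z hActz) (not_le.mpr hyz')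
    case neg =>
      -- ORIGINAL MERGE: w' = swap a y * w merges the cycles of a and y
      rw [if_neg hc] at hy3
      by_cases h1 : w.SameCycle y z
      · exact absurd (hy3 z h1) (not_le.mpr hyz')
      by_cases h3 : w.SameCycle (bm π y) z
      · -- 2c case : z in the cycle of a of w
        rw [if_pos (sc_mono_merge hay hc h3)] at hz3
        have hsep_v : ¬ (Equiv.swap (bm π y) z * w).SameCycle (bm π y) z :=
          fun hcon => split_not_sameCycle haz h3 hcon.symm
        have hvny : ¬ (Equiv.swap (bm π y) z * w).SameCycle z y := by
          intro hcon
          exact hc (h3.trans (sc_mono_split haz h3 hcon))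
        have htriple : Equiv.swap (bm π y) z * (Equiv.swap (bm π y) y * w)
            = Equiv.swap z y * (Equiv.swap (bm π y) z * w) := by
          rw [← mul_assoc, swap_triple hay haz (Ne.symm hzy), mul_assoc]
        have hWv1 : Equiv.swap z y * (Equiv.swap (bm π y) z * w) ∈ WS σ π := by
          rw [← htriple]
          exact hz2
        have hsep_v1 : ¬ (Equiv.swap z y * (Equiv.swap (bm π y) z * w)).SameCycle (bm π y) z := by
          intro hcon
          rcases (merge_char hzy hvny (bm π y) z).mp hcon with h | ⟨ha', -⟩
          · exact hsep_v h
          · rcases ha' with h | h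
            · exact hsep_v h
            · exact hc (sc_mono_split haz h3 h)
        have hWv : Equiv.swap (bm π y) z * w ∈ WS σ π := by
          rw [mem_WS]
          constructor
          · rw [Setoid.le_def]
            intro p q hpq
            have hw_pq : w.SameCycle p q := ws_sc_mono hw hpq
            rcases (split_char haz h3 p q).mp hw_pq with h | ⟨hp, hq⟩
            · exact h
            · have hv1_pq : (Equiv.swap z y * (Equiv.swap (bm π y) z * w)).SameCycle p q :=
                ws_sc_mono hWv1 hpq
              rcases hp with hp | hp <;> rcases hq with hq | hq
              · exact hp.trans hq.symm
              · exfalso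
                apply hsep_v1
                exact ((sc_mono_merge hzy hvny hp).symm.trans hv1_pq).trans
                  (sc_mono_merge hzy hvny hq)
              · exfalso
                apply hsep_v1
                exact ((sc_mono_merge hzy hvny hq).symm.trans hv1_pq.symm).trans
                  (sc_mono_merge hzy hvny hp)
              · exact hp.trans hq.symm
          · exact orb_swap_mul_le hπaz (mem_WS.mp hw).2
        have hActz : Active σ π w z := by
          unfold Active uact
          rw [hbmz]
          refine ⟨hz1, hWv, ?_⟩
          intro q hq
          rw [if_pos h3] at hq
          apply hz3 q
          rw [htriple]
          exact sc_mono_merge hzy hvny hq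
        exact absurd (hmin z hActz) (not_le.mpr hyz')
      · -- D1-h2 case : cycle of z untouched
        have hnc'az : ¬ (Equiv.swap (bm π y) y * w).SameCycle (bm π y) z := by
          intro hcon
          rcases (merge_char hay hc (bm π y) z).mp hcon with h | ⟨-, h2⟩
          · exact h3 h
          · rcases h2 with h | h
            · exact h3 h.symm
            · exact h1 h.symm
        rw [if_neg hnc'az] at hz3
        have hActz : Active σ π w z := by
          unfold Active uact
          rw [hbmz]
          refine ⟨hz1, merge_mem hw hπaz haz h3, ?_⟩
          intro q hq
          rw [if_neg h3] at hq
          apply hz3 q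
          exact sc_mono_merge hay hc hq
        exact absurd (hmin z hActz) (not_le.mpr hyz')
  case neg =>
    -- different blocks
    have hπbz : π (bm π z) z := bm_rel π z
    have hnza : ¬ π z (bm π y) := fun h => hblock (π.trans h hπay)
    have hnba : ¬ π (bm π z) (bm π y) := fun h => hnza (π.trans (π.symm hπbz) h)
    have hba : bm π z ≠ bm π y := fun h => hnba (h ▸ π.refl (bm π z))
    have hby' : bm π z ≠ y := fun h => hblock (π.symm (h ▸ hπbz))
    have hza' : z ≠ bm π y := fun h => hnza (h ▸ π.refl z)
    have hptv : ∀ x, π x ((Equiv.swap (bm π z) z * w) x) := by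
      intro x
      rw [swap_mul_apply]
      exact setoid_swap_stable hπbz (hptw x)
    have hcomm : Equiv.swap (bm π z) z * (Equiv.swap (bm π y) y * w)
        = Equiv.swap (bm π y) y * (Equiv.swap (bm π z) z * w) := by
      rw [← mul_assoc, ← mul_assoc, swap_comm_of_ne hba hby' hza' hzy]
    have hActz : Active σ π w z := by
      refine ⟨hz1, ?_, ?_⟩
      · rw [mem_WS]
        constructor
        · rw [Setoid.le_def]
          intro u u' huu'
          by_cases hub : π u (bm π z)
          · have hnua : ¬ π u (bm π y) := fun h => hnba (π.trans (π.symm hub) h)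
            have hσv1 := ws_sc_mono hz2 huu'
            rw [hcomm] at hσv1
            exact (local_sameCycle hptv hπay hnua u').mp hσv1
          · exact (local_sameCycle hptw hπbz hub u').mpr (ws_sc_mono hw huu')
        · exact orb_swap_mul_le hπbz (mem_WS.mp hw).2
      · intro q hq
        unfold uact at hq
        have hscbz : w.SameCycle (bm π z) z ↔
            (Equiv.swap (bm π y) y * w).SameCycle (bm π z) z :=
          (local_sameCycle hptw hπay hnba z).symm
        by_cases hbc : w.SameCycle (bm π z) z
        · rw [if_pos hbc] at hq
          apply hz3 q
          rw [if_pos (hscbz.mp hbc), hcomm]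
          exact (local_sameCycle hptv hπay hnza q).mpr hq
        · rw [if_neg hbc] at hq
          apply hz3 q
          rw [if_neg (fun hcon => hbc (hscbz.mpr hcon))]
          exact (local_sameCycle hptw hπay hnza q).mpr hq
    exact absurd (hmin z hActz) (not_le.mpr hyz')

/-- The key combinatorial sign lemma, proved by a sign-reversing involution. -/
lemma key_sign (σ π : Setoid (Fin n)) :
    ∃ k : ℕ, (∑ w ∈ WS σ π, sgnQ w)
      = (-1 : ℚ) ^ n * (-1 : ℚ) ^ (π.classes.ncard) * k := by
  classical
  refine ⟨((WS σ π).filter (fun w => ∀ y, ¬ Active σ π w y)).card, ?_⟩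
  have hsplit := Finset.sum_filter_add_sum_filter_not (WS σ π)
    (fun w => ∀ y, ¬ Active σ π w y) sgnQ
  have hne : ∀ w ∈ (WS σ π).filter (fun w => ¬ ∀ y, ¬ Active σ π w y),
      (Finset.univ.filter (Active σ π w)).Nonempty := by
    intro w hw
    obtain ⟨-, hex⟩ := Finset.mem_filter.mp hw
    obtain ⟨y, hy⟩ := not_forall.mp hex
    exact ⟨y, Finset.mem_filter.mpr ⟨Finset.mem_univ y, of_not_not hy⟩⟩
  have hact : ∀ w (hw : w ∈ (WS σ π).filter (fun w => ¬ ∀ y, ¬ Active σ π w y)),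
      Active σ π w ((Finset.univ.filter (Active σ π w)).min' (hne w hw)) := by
    intro w hw
    exact (Finset.mem_filter.mp (Finset.min'_mem _ (hne w hw))).2
  have hminimal : ∀ w (hw : w ∈ (WS σ π).filter (fun w => ¬ ∀ y, ¬ Active σ π w y)),
      ∀ z, Active σ π w z → (Finset.univ.filter (Active σ π w)).min' (hne w hw) ≤ z := by
    intro w hw z hz
    exact Finset.min'_le _ z (Finset.mem_filter.mpr ⟨Finset.mem_univ z, hz⟩)
  have hzero : (∑ w ∈ (WS σ π).filter (fun w => ¬ ∀ y, ¬ Active σ π w y), sgnQ w) = 0 := by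
    refine Finset.sum_involution
      (fun w hw => Equiv.swap
        (bm π ((Finset.univ.filter (Active σ π w)).min' (hne w hw)))
        ((Finset.univ.filter (Active σ π w)).min' (hne w hw)) * w) ?_ ?_ ?_ ?_
    · intro w hw
      rw [sgnQ_swap_mul (Ne.symm (hact w hw).1)]
      ring
    · intro w hw _
      intro hcontra
      have h1 : Equiv.swap
          (bm π ((Finset.univ.filter (Active σ π w)).min' (hne w hw)))
          ((Finset.univ.filter (Active σ π w)).min' (hne w hw)) = 1 := by
        have := congrArg (· * w⁻¹) hcontra
        simpa [mul_assoc] using this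
      exact (hact w hw).1 (Equiv.swap_eq_one_iff.mp h1).symm
    · intro w hw
      have hwWS : w ∈ WS σ π := (Finset.mem_filter.mp hw).1
      rw [Finset.mem_filter]
      refine ⟨(hact w hw).2.1, ?_⟩
      intro hcon
      exact hcon _ (active_again hwWS (hact w hw))
    · intro w hw
      have hwWS : w ∈ WS σ π := (Finset.mem_filter.mp hw).1
      set y0 := (Finset.univ.filter (Active σ π w)).min' (hne w hw) with hy0
      set w' := Equiv.swap (bm π y0) y0 * w with hw'
      have hw'mem : w' ∈ (WS σ π).filter (fun w => ¬ ∀ y, ¬ Active σ π w y) := by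
        rw [Finset.mem_filter]
        refine ⟨(hact w hw).2.1, fun hcon => hcon _ (active_again hwWS (hact w hw))⟩
      have hsame : (Finset.univ.filter (Active σ π w')).min' (hne w' hw'mem) = y0 := by
        apply le_antisymm
        · exact Finset.min'_le _ y0
            (Finset.mem_filter.mpr ⟨Finset.mem_univ y0, active_again hwWS (hact w hw)⟩)
        · apply Finset.le_min'
          intro b hb
          exact active_min_stable hwWS (hact w hw) (hminimal w hw)
            (Finset.mem_filter.mp hb).2
      show Equiv.swap (bm π ((Finset.univ.filter (Active σ π w')).min' _))
          ((Finset.univ.filter (Active σ π w')).min' _) * w' = w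
      rw [hsame, hw', ← mul_assoc, Equiv.swap_mul_self, one_mul]
  have hfixval : ∀ w ∈ (WS σ π).filter (fun w => ∀ y, ¬ Active σ π w y),
      sgnQ w = (-1:ℚ) ^ n * (-1:ℚ) ^ (π.classes.ncard) := by
    intro w hw
    obtain ⟨hwWS, hnoact⟩ := Finset.mem_filter.mp hw
    have horb : orb w = π := fix_orb_eq hwWS hnoact
    have hkey := sgnQ_mul_classes w
    rw [horb] at hkey
    have hsq : ((-1:ℚ) ^ π.classes.ncard) * ((-1:ℚ) ^ π.classes.ncard) = 1 := by
      rw [← pow_add]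
      exact Even.neg_one_pow ⟨π.classes.ncard, rfl⟩
    calc sgnQ w = sgnQ w * (((-1:ℚ) ^ π.classes.ncard) * ((-1:ℚ) ^ π.classes.ncard)) := by
          rw [hsq, mul_one]
      _ = (-1:ℚ) ^ n * (-1:ℚ) ^ (π.classes.ncard) := by rw [← mul_assoc, hkey]
  rw [← hsplit, hzero, add_zero, Finset.sum_congr rfl hfixval, Finset.sum_const]
  rw [nsmul_eq_mul]
  ring

end ESignAux

open ESignAux in
/-- e_pi is x-positive when n - (number of blocks of pi) is even
and x-negative when it is odd. -/
theorem efun_x_sign (n : ℕ) (π : Setoid (Fin n))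
    (mu : Setoid (Fin n) → Setoid (Fin n) → ℚ) (hmu : MoebiusPi n mu) :
    (Even (n - π.classes.ncard) → ∃ c : Setoid (Fin n) → ℚ, (∀ σ, 0 ≤ c σ) ∧
      efun π = ∑ σ : Setoid (Fin n), c σ • xf mu σ) ∧
    (Odd (n - π.classes.ncard) → ∃ c : Setoid (Fin n) → ℚ, (∀ σ, c σ ≤ 0) ∧
      efun π = ∑ σ : Setoid (Fin n), c σ • xf mu σ) := by
  have hle : π.classes.ncard ≤ n := ncard_classes_le π
  have hdecomp := efun_decomp hmu π
  have hval : ∀ s : Setoid (Fin n), ∃ k : ℕ,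
      cQ mu π s = (-1 : ℚ) ^ n * (-1 : ℚ) ^ (π.classes.ncard) * k := by
    intro s
    rw [cQ_eq_sum_perm hmu π s]
    exact key_sign s π
  constructor
  · intro heven
    refine ⟨cQ mu π, ?_, hdecomp⟩
    intro s
    obtain ⟨k, hk⟩ := hval s
    rw [hk]
    have hsign : (-1 : ℚ) ^ n * (-1 : ℚ) ^ (π.classes.ncard) = 1 := by
      rw [← pow_add]
      apply Even.neg_one_pow
      rw [Nat.even_add]
      rw [Nat.even_sub hle] at heven
      exact heven
    rw [hsign, one_mul]
    positivity
  · intro hodd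
    refine ⟨cQ mu π, ?_, hdecomp⟩
    intro s
    obtain ⟨k, hk⟩ := hval s
    rw [hk]
    have hsign : (-1 : ℚ) ^ n * (-1 : ℚ) ^ (π.classes.ncard) = -1 := by
      rw [← pow_add]
      apply Odd.neg_one_pow
      rw [Nat.odd_add]
      rw [Nat.odd_sub hle] at hodd
      exact hodd
    rw [hsign]
    simp

end
end
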